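/- arXiv:math/0604096 — 9 statements merged into one kernel-verified Lean document; each statement's English description precedes it below -/
import Mathlib

section
/- For all integers $j > 0$, $s > 0$, $i > 0$ the binomial identity $\binom{j+s}{i} - (-1)^s\binom{j}{i-s} = \sum_{k=0}^{\lfloor (s-1)/2 \rfloor} \binom{s-k-1}{k}\left(\binom{j+k+1}{i-k} + \binom{j+k}{i-k-1}\right)$ holds, with the convention that $\binom{a}{b} = 0$ whenever $b < 0$ or $b > a$. -/
/-- Binomial coefficient on integers, zero outside the range `0 ≤ b ≤ a`. -/
noncomputable def binomZ (a b : ℤ) : ℚ :=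
  if 0 ≤ b ∧ b ≤ a then (a.toNat.choose b.toNat : ℚ) else 0

lemma binomZ_eq (a b : ℤ) : binomZ a b = if 0 ≤ a ∧ 0 ≤ b then (a.toNat.choose b.toNat : ℚ) else 0 := by
  unfold binomZ
  by_cases h1 : 0 ≤ b ∧ b ≤ a
  · rw [if_pos h1, if_pos ⟨le_trans h1.1 h1.2, h1.1⟩]
  · rw [if_neg h1]
    by_cases h2 : 0 ≤ a ∧ 0 ≤ b
    · rw [if_pos h2, Nat.choose_eq_zero_of_lt (by omega)]; norm_num
    · rw [if_neg h2]

lemma binomZ_zero_of_neg (a b : ℤ) (h : b < 0) : binomZ a b = 0 := by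
  unfold binomZ; rw [if_neg (by omega)]

lemma binomZ_zero_of_lt (a b : ℤ) (h : a < b) : binomZ a b = 0 := by
  unfold binomZ; rw [if_neg (by omega)]

lemma pascal (a b : ℤ) (h : 0 ≤ a ∨ 1 ≤ b) :
    binomZ (a + 1) b = binomZ a b + binomZ a (b - 1) := by
  rw [binomZ_eq, binomZ_eq, binomZ_eq]
  split_ifs with h1 h2 h3 h4 h5 h6 h7 <;> try omega
  · -- all true : b ≥ 1, a ≥ 0
    have e1 : (a+1).toNat = a.toNat + 1 := by omega
    have e2 : b.toNat = (b-1).toNat + 1 := by omega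
    rw [e1, e2, Nat.choose_succ_succ]
    push_cast; ring
  · -- b = 0 case
    have e : b.toNat = 0 := by omega
    simp [e]
  · -- a = -1, b ≥ 1
    rw [Nat.choose_eq_zero_of_lt (by omega)]; norm_num
  · norm_num

noncomputable def T (j i : ℤ) (k : ℕ) : ℚ :=
  binomZ (j + k + 1) (i - k) + binomZ (j + k) (i - k - 1)

noncomputable def S (n : ℕ) (j i : ℤ) : ℚ :=
  ∑ k ∈ Finset.range (n + 1), binomZ ((n : ℤ) - k) k * T j i k

lemma T_succ (j i : ℤ) (k : ℕ) : T j i (k + 1) = T (j + 1) (i - 1) k := by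
  unfold T
  rw [show j + ((k:ℕ)+1 : ℕ) + 1 = (j+1) + k + 1 by push_cast; ring,
      show i - ((k:ℕ)+1 : ℕ) = (i-1) - k by push_cast; ring,
      show j + ((k:ℕ)+1 : ℕ) = (j+1) + k by push_cast; ring]

lemma S_rec (n : ℕ) (j i : ℤ) : S (n+2) j i = S (n+1) j i + S n (j+1) (i-1) := by
  have h1 : S (n+2) j i = (∑ k ∈ Finset.range (n+3), binomZ ((n:ℤ)+1 - k) k * T j i k)
      + ∑ k ∈ Finset.range (n+3), binomZ ((n:ℤ)+1 - k) ((k:ℤ)-1) * T j i k := by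
    rw [S, ← Finset.sum_add_distrib]
    apply Finset.sum_congr rfl
    intro k hk
    simp only [Finset.mem_range] at hk
    rw [show ((n+2:ℕ):ℤ) - k = ((n:ℤ)+1-k)+1 by push_cast; ring,
        pascal _ _ (by omega)]
    ring
  rw [h1]
  congr 1
  · rw [Finset.sum_range_succ, binomZ_zero_of_lt _ _ (by push_cast; omega), zero_mul, add_zero, S]
    apply Finset.sum_congr rfl
    intro k hk
    rw [show ((n+1:ℕ):ℤ) - k = (n:ℤ)+1-k by push_cast; ring]
  · rw [Finset.sum_range_succ']
    simp only [Nat.cast_zero, zero_sub]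
    rw [binomZ_zero_of_neg _ _ (by omega), zero_mul, add_zero,
        Finset.sum_range_succ, binomZ_zero_of_lt _ _ (by push_cast; omega), zero_mul, add_zero, S]
    apply Finset.sum_congr rfl
    intro k hk
    rw [T_succ, show ((n:ℤ)+1 - ((k:ℕ)+1:ℕ)) = (n:ℤ) - k by push_cast; ring,
        show (((k:ℕ)+1:ℕ):ℤ) - 1 = (k:ℤ) by push_cast; ring]

lemma binomZ_zero_zero : binomZ 0 0 = 1 := by unfold binomZ; norm_num

lemma mainL (n : ℕ) : ∀ j i : ℤ, 1 ≤ j →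
    binomZ (j + ((n:ℤ)+1)) i - (-1:ℚ)^(n+1) * binomZ j (i - ((n:ℤ)+1)) = S n j i := by
  induction n using Nat.strong_induction_on with
  | _ n ih =>
    match n, ih with
    | 0, _ =>
      intro j i hj
      rw [S, Finset.sum_range_one]
      simp only [Nat.cast_zero, sub_zero, T]
      rw [binomZ_zero_zero]
      push_cast
      ring_nf
    | 1, _ =>
      intro j i hj
      rw [S, Finset.sum_range_succ, Finset.sum_range_one]
      simp only [Nat.cast_zero, Nat.cast_one, sub_zero, T]
      rw [binomZ_zero_of_lt ((1:ℤ)-1) 1 (by omega), zero_mul, add_zero]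
      have c1 : binomZ (1:ℤ) 0 = 1 := by unfold binomZ; norm_num
      rw [c1, one_mul]
      have p1 : binomZ ((j+1) + 1) i = binomZ (j+1) i + binomZ (j+1) (i-1) :=
        pascal _ _ (by omega)
      have p2 : binomZ (j + 1) (i-1) = binomZ j (i-1) + binomZ j (i-1-1) :=
        pascal _ _ (by omega)
      rw [show j + ((1:ℤ)+1) = (j+1)+1 by ring, p1, p2]
      rw [show i - ((1:ℤ)+1) = i-1-1 by ring,
          show j + 0 + 1 = j + 1 by ring, show j + (0:ℤ) = j by ring]
      norm_num
      ring
    | (m+2), ih =>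
      intro j i hj
      have h1 := ih m (by omega) (j+1) (i-1) (by omega)
      have h2 := ih (m+1) (by omega) j i hj
      rw [S_rec, ← h1, ← h2]
      have p1 : binomZ ((j + ((m:ℤ)+2)) + 1) i
          = binomZ (j+((m:ℤ)+2)) i + binomZ (j+((m:ℤ)+2)) (i-1) := pascal _ _ (by omega)
      have p2 : binomZ (j + 1) ((i - ((m:ℤ)+2))) = binomZ j (i-((m:ℤ)+2)) + binomZ j (i-((m:ℤ)+2)-1) :=
        pascal _ _ (by omega)
      rw [show j + (((m+2:ℕ):ℤ)+1) = (j + ((m:ℤ)+2)) + 1 by push_cast; ring, p1]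
      rw [show i - (((m+2:ℕ):ℤ)+1) = i - ((m:ℤ)+2) - 1 by push_cast; ring]
      rw [show j + (((m+1:ℕ):ℤ)+1) = j + ((m:ℤ)+2) by push_cast; ring]
      rw [show i - (((m+1:ℕ):ℤ)+1) = i - ((m:ℤ)+2) by push_cast; ring]
      rw [show (j+1) + ((m:ℤ)+1) = j + ((m:ℤ)+2) by ring]
      rw [show (i-1) - ((m:ℤ)+1) = i - ((m:ℤ)+2) by ring, p2]
      ring

/-- For all integers `j > 0`, `s > 0`, `i > 0`,
`C(j+s, i) - (-1)^s C(j, i-s)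
  = ∑_{k=0}^{⌊(s-1)/2⌋} C(s-k-1, k) (C(j+k+1, i-k) + C(j+k, i-k-1))`. -/
theorem stmt0 (j s i : ℤ) (hj : 0 < j) (hs : 0 < s) (hi : 0 < i) :
    binomZ (j + s) i - (-1 : ℚ) ^ s * binomZ j (i - s)
      = ∑ k ∈ Finset.range (((s - 1) / 2).toNat + 1),
          binomZ (s - (k : ℤ) - 1) k *
            (binomZ (j + k + 1) (i - k) + binomZ (j + k) (i - k - 1)) := by
  set n : ℕ := (s-1).toNat with hn
  have hsn : s = (n:ℤ) + 1 := by omega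
  have hA : (∑ k ∈ Finset.range (((s - 1) / 2).toNat + 1),
          binomZ (s - (k : ℤ) - 1) k *
            (binomZ (j + k + 1) (i - k) + binomZ (j + k) (i - k - 1))) = S n j i := by
    rw [S]
    have hfun : ∀ k : ℕ, binomZ (s - (k : ℤ) - 1) k *
        (binomZ (j + k + 1) (i - k) + binomZ (j + k) (i - k - 1))
        = binomZ ((n:ℤ) - k) k * T j i k := by
      intro k
      rw [T, show s - (k:ℤ) - 1 = (n:ℤ) - k by omega]
    simp only [hfun]
    apply Finset.sum_subset
    · intro k hk
      simp only [Finset.mem_range] at *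
      omega
    · intro k hk hk2
      simp only [Finset.mem_range] at *
      rw [binomZ_zero_of_lt _ _ (by omega), zero_mul]
  rw [hA, ← mainL n j i (by omega), hsn]
  rw [show ((-1:ℚ)) ^ ((n:ℤ)+1) = ((-1:ℚ)) ^ (((n+1:ℕ):ℤ)) by push_cast; ring,
      zpow_natCast]
end

section
/- Let $g$ be an infinitely differentiable real function on an open interval satisfying the differential equation $2g' = 1 - g^2$. Then for every integer $i \ge 2$, on that interval $\frac{i}{2}\, g \cdot g^{(i-1)} + \sum_{k=0}^{\lfloor (i-1)/2 \rfloor} \binom{i}{2k} B_{2k}\, g^{(i-2k)} = 0$, where $g^{(j)}$ denotes the $j$-th derivative of $g$. -/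
section Aux

open Polynomial Finset

/-- The polynomial giving the n-th derivative of a solution of `2g' = 1 - g²`. -/
noncomputable def Pb : ℕ → Polynomial ℚ
  | 0 => Polynomial.X
  | n + 1 => Polynomial.C (2⁻¹ : ℚ) * ((1 - Polynomial.X ^ 2) * Polynomial.derivative (Pb n))

noncomputable def Tb (n : ℕ) : Polynomial ℚ :=
  ∑ j ∈ Finset.range (n + 1), Polynomial.C ((n.choose j : ℚ)) * Pb j

lemma two_C_half : (2 : Polynomial ℚ) * Polynomial.C (2⁻¹ : ℚ) = 1 := by
  rw [← map_ofNat (Polynomial.C : ℚ →+* Polynomial ℚ) 2, ← Polynomial.C_mul]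
  norm_num

lemma Tb_succ (n : ℕ) :
    Tb (n + 1) = Tb n + Polynomial.C (2⁻¹ : ℚ) * ((1 - Polynomial.X ^ 2) *
      Polynomial.derivative (Tb n)) := by
  have hD : Polynomial.C (2⁻¹ : ℚ) * ((1 - Polynomial.X ^ 2) * Polynomial.derivative (Tb n))
      = ∑ j ∈ Finset.range (n + 1), Polynomial.C ((n.choose j : ℚ)) * Pb (j + 1) := by
    rw [Tb, derivative_sum, Finset.mul_sum, Finset.mul_sum]
    refine Finset.sum_congr rfl fun j _ => ?_
    rw [derivative_C_mul, Pb]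
    ring
  rw [hD, Tb, Tb]
  rw [Finset.sum_range_succ' (fun j => Polynomial.C (((n+1).choose j : ℚ)) * Pb j) (n+1)]
  have hsplit : ∀ j ∈ Finset.range (n + 1),
      Polynomial.C (((n+1).choose (j+1) : ℚ)) * Pb (j+1)
        = Polynomial.C ((n.choose (j+1) : ℚ)) * Pb (j+1)
          + Polynomial.C ((n.choose j : ℚ)) * Pb (j+1) := by
    intro j _
    rw [Nat.choose_succ_succ, Nat.cast_add, Polynomial.C_add]
    ring
  rw [Finset.sum_congr rfl hsplit, Finset.sum_add_distrib]
  have h2 : (∑ j ∈ Finset.range (n + 1), Polynomial.C ((n.choose (j+1) : ℚ)) * Pb (j+1))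
      + Polynomial.C (((n+1).choose 0 : ℚ)) * Pb 0
      = ∑ j ∈ Finset.range (n + 2), Polynomial.C ((n.choose j : ℚ)) * Pb j := by
    rw [Finset.sum_range_succ' (fun j => Polynomial.C ((n.choose j : ℚ)) * Pb j) (n+1)]
    simp
  have h3 : (∑ j ∈ Finset.range (n + 2), Polynomial.C ((n.choose j : ℚ)) * Pb j)
      = ∑ j ∈ Finset.range (n + 1), Polynomial.C ((n.choose j : ℚ)) * Pb j := by
    rw [Finset.sum_range_succ]
    simp [Nat.choose_succ_self]
  linear_combination h2 + h3

lemma key (n : ℕ) (hn : 1 ≤ n) :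
    (1 + Polynomial.X) * Tb n = (1 + Polynomial.X) - (1 - Polynomial.X) * Pb n := by
  induction n with
  | zero => omega
  | succ n ih =>
    rcases Nat.eq_or_lt_of_le hn with h | h
    · have hn0 : n = 0 := by omega
      subst hn0
      have hT0 : Tb 0 = Polynomial.X := by simp [Tb, show Pb 0 = Polynomial.X from rfl]
      rw [Tb_succ, hT0, show Pb (0+1) = Polynomial.C (2⁻¹ : ℚ) *
        ((1 - Polynomial.X ^ 2) * Polynomial.derivative (Pb 0)) from rfl,
        show Pb 0 = Polynomial.X from rfl, Polynomial.derivative_X]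
      linear_combination (1 - Polynomial.X ^ 2) * two_C_half
    · have hn1 : 1 ≤ n := by omega
      have e1 := ih hn1
      have e2 := congrArg Polynomial.derivative e1
      simp only [derivative_mul, derivative_add, derivative_sub, derivative_one,
        Polynomial.derivative_X, zero_add, mul_one, one_mul, zero_sub] at e2
      have hX : (1 + Polynomial.X : Polynomial ℚ) ≠ 0 := by
        intro h'
        have := congrArg (Polynomial.coeff · 0) h'
        simp at this
      apply mul_left_cancel₀ hX
      rw [Tb_succ, Pb]
      have h2 := two_C_half
      linear_combination
        ((1+Polynomial.X) - Polynomial.C (2⁻¹:ℚ) * (1+Polynomial.X) * (1-Polynomial.X)) * e1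
        + (Polynomial.C (2⁻¹:ℚ) * (1+Polynomial.X)^2 * (1-Polynomial.X)) * e2
        + ((1+Polynomial.X) * (1-Polynomial.X) * Pb n) * h2

noncomputable def Gs : PowerSeries (Polynomial ℚ) :=
  PowerSeries.mk fun n => Polynomial.C ((1 : ℚ) / n.factorial) * Pb n

lemma C_fact_ne (n : ℕ) : (Polynomial.C ((n.factorial : ℚ)) : Polynomial ℚ) ≠ 0 := by
  simp [Nat.factorial_ne_zero]

lemma hdiamond :
    Gs * ((1 + PowerSeries.C Polynomial.X) * PowerSeries.exp (Polynomial ℚ)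
        + (1 - PowerSeries.C Polynomial.X))
      = (1 + PowerSeries.C Polynomial.X) * PowerSeries.exp (Polynomial ℚ)
        - (1 - PowerSeries.C Polynomial.X) := by
  have hXC : (1 + PowerSeries.C (R := Polynomial ℚ) Polynomial.X)
      = PowerSeries.C (1 + Polynomial.X) := by simp [map_add]
  have hXC' : (1 - PowerSeries.C (R := Polynomial ℚ) Polynomial.X)
      = PowerSeries.C (1 - Polynomial.X) := by simp [map_sub]
  refine PowerSeries.ext fun n => ?_
  rw [hXC, hXC', PowerSeries.coeff_mul, Finset.Nat.sum_antidiagonal_eq_sum_range_succ_mk]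
  have hterm : ∀ k ∈ Finset.range (n + 1),
      (PowerSeries.coeff k) Gs * (PowerSeries.coeff (n - k))
          (PowerSeries.C (1 + Polynomial.X) * PowerSeries.exp (Polynomial ℚ)
            + PowerSeries.C (1 - Polynomial.X))
        = (1 + Polynomial.X) * (Polynomial.C ((1:ℚ)/k.factorial)
            * Polynomial.C ((1:ℚ)/(n-k).factorial) * Pb k)
          + (if n - k = 0 then (1 - Polynomial.X) * (Polynomial.C ((1:ℚ)/k.factorial) * Pb k)
             else 0) := by
    intro k _
    rw [map_add, PowerSeries.coeff_C_mul, PowerSeries.coeff_exp, PowerSeries.coeff_C,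
      Polynomial.algebraMap_eq]
    simp only [Gs, PowerSeries.coeff_mk]
    split_ifs
    · ring
    · ring
  rw [Finset.sum_congr rfl hterm, Finset.sum_add_distrib]
  have hlast : (∑ k ∈ Finset.range (n + 1),
      if n - k = 0 then (1 - Polynomial.X) * (Polynomial.C ((1:ℚ)/k.factorial) * Pb k)
      else 0) = (1 - Polynomial.X) * (Polynomial.C ((1:ℚ)/n.factorial) * Pb n) := by
    rw [Finset.sum_eq_single_of_mem n (Finset.self_mem_range_succ n)]
    · simp
    · intro k hk hkn
      have hk' := Finset.mem_range.mp hk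
      rw [if_neg (by omega)]
  rw [hlast, map_sub, PowerSeries.coeff_C_mul, PowerSeries.coeff_exp, PowerSeries.coeff_C,
    Polynomial.algebraMap_eq]
  apply mul_left_cancel₀ (C_fact_ne n)
  have hsum : Polynomial.C ((n.factorial : ℚ)) * ∑ k ∈ Finset.range (n + 1),
      (1 + Polynomial.X) * (Polynomial.C ((1:ℚ)/k.factorial)
        * Polynomial.C ((1:ℚ)/(n-k).factorial) * Pb k)
      = (1 + Polynomial.X) * Tb n := by
    rw [Finset.mul_sum, Tb, Finset.mul_sum]
    refine Finset.sum_congr rfl fun k hk => ?_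
    have hkn : k ≤ n := Nat.lt_succ_iff.mp (Finset.mem_range.mp hk)
    rw [← Polynomial.C_mul]
    have hc : Polynomial.C ((n.factorial : ℚ)) * Polynomial.C ((1:ℚ)/k.factorial * ((1:ℚ)/(n-k).factorial))
        = Polynomial.C ((n.choose k : ℚ)) := by
      rw [← Polynomial.C_mul]
      congr 1
      rw [Nat.cast_choose ℚ hkn]
      field_simp
    linear_combination ((1 + Polynomial.X) * Pb k) * hc
  rw [mul_add, hsum]
  have hcc : Polynomial.C ((n.factorial : ℚ)) * Polynomial.C ((1:ℚ)/n.factorial) = 1 := by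
    rw [← Polynomial.C_mul]
    rw [mul_one_div, div_self (by exact_mod_cast Nat.factorial_ne_zero n)]
    simp
  rcases Nat.eq_zero_or_pos n with hn0 | hn1
  · subst hn0
    rw [if_pos rfl, show Tb 0 = Polynomial.X from by
      simp [Tb, show Pb 0 = Polynomial.X from rfl],
      show Pb 0 = Polynomial.X from rfl]
    simp only [Nat.factorial_zero, Nat.cast_one, Polynomial.C_1, div_one] at hcc ⊢
    linear_combination ((1 - Polynomial.X) * Polynomial.X - 1 - Polynomial.X) * hcc
  · have hk := key n hn1
    rw [if_neg (by omega)]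
    linear_combination hk + ((1 - Polynomial.X) * Pb n - 1 - Polynomial.X) * hcc

lemma claim2 :
    2 * (bernoulliPowerSeries (Polynomial ℚ) * Gs)
      = 2 * PowerSeries.C Polynomial.X * bernoulliPowerSeries (Polynomial ℚ)
        + (1 + PowerSeries.C Polynomial.X) * (PowerSeries.X * (1 - Gs)) := by
  have hB := bernoulliPowerSeries_mul_exp_sub_one (Polynomial ℚ)
  have hE : (PowerSeries.exp (Polynomial ℚ) - 1) ≠ 0 := fun h => by
    have h1 := congrArg (PowerSeries.coeff 1) h
    simp [PowerSeries.coeff_exp, Polynomial.algebraMap_eq] at h1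
  apply mul_right_cancel₀ hE
  linear_combination (2 * Gs - 2 * PowerSeries.C Polynomial.X) * hB
    + PowerSeries.X * hdiamond

lemma coeff_Gs (n : ℕ) :
    (PowerSeries.coeff n) Gs = Polynomial.C ((1:ℚ) / n.factorial) * Pb n := by
  simp [Gs]

lemma W (n : ℕ) (hn : 2 ≤ n) :
    ∑ k ∈ Finset.range (n + 1), Polynomial.C ((n.choose k : ℚ) * _root_.bernoulli k) * Pb (n - k)
      = Polynomial.C (_root_.bernoulli n) * Polynomial.X
        - Polynomial.C ((n : ℚ) / 2) * ((1 + Polynomial.X) * Pb (n - 1)) := by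
  obtain ⟨m, rfl⟩ : ∃ m, n = m + 2 := ⟨n - 2, by omega⟩
  have hc := congrArg (PowerSeries.coeff (m + 2)) claim2
  rw [map_add] at hc
  rw [show (2 : PowerSeries (Polynomial ℚ)) * PowerSeries.C Polynomial.X
      = PowerSeries.C (2 * Polynomial.X) from by
    rw [map_mul, map_ofNat], show ((1 : PowerSeries (Polynomial ℚ)) + PowerSeries.C Polynomial.X)
      = PowerSeries.C (1 + Polynomial.X) from by simp [map_add],
    show (2 : PowerSeries (Polynomial ℚ)) * (bernoulliPowerSeries (Polynomial ℚ) * Gs)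
      = PowerSeries.C 2 * (bernoulliPowerSeries (Polynomial ℚ) * Gs) from by
    rw [map_ofNat]] at hc
  rw [PowerSeries.coeff_C_mul, PowerSeries.coeff_C_mul, PowerSeries.coeff_C_mul,
    PowerSeries.coeff_mul, Finset.Nat.sum_antidiagonal_eq_sum_range_succ_mk,
    PowerSeries.coeff_succ_X_mul, map_sub, PowerSeries.coeff_one] at hc
  simp only [bernoulliPowerSeries, PowerSeries.coeff_mk, coeff_Gs,
    Polynomial.algebraMap_eq] at hc
  rw [if_neg (Nat.succ_ne_zero m)] at hc
  -- rewrite each summand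
  have hterm : ∀ k ∈ Finset.range (m + 2 + 1),
      Polynomial.C (_root_.bernoulli k / k.factorial) * (Polynomial.C ((1:ℚ) / (m + 2 - k).factorial) * Pb (m + 2 - k))
        = Polynomial.C ((1:ℚ) / (m+2).factorial) *
            (Polynomial.C (((m+2).choose k : ℚ) * _root_.bernoulli k) * Pb (m + 2 - k)) := by
    intro k hk
    have hkn : k ≤ m + 2 := Nat.lt_succ_iff.mp (Finset.mem_range.mp hk)
    have hcc : Polynomial.C (_root_.bernoulli k / k.factorial) * Polynomial.C ((1:ℚ) / (m + 2 - k).factorial)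
        = Polynomial.C ((1:ℚ) / (m+2).factorial) * Polynomial.C (((m+2).choose k : ℚ) * _root_.bernoulli k) := by
      rw [← Polynomial.C_mul, ← Polynomial.C_mul]
      congr 1
      rw [Nat.cast_choose ℚ hkn]
      have h1 : (k.factorial : ℚ) ≠ 0 := by exact_mod_cast Nat.factorial_ne_zero k
      have h2 : ((m + 2 - k).factorial : ℚ) ≠ 0 := by exact_mod_cast Nat.factorial_ne_zero _
      have h3 : (((m+2).factorial : ℚ)) ≠ 0 := by exact_mod_cast Nat.factorial_ne_zero _
      field_simp
    linear_combination Pb (m + 2 - k) * hcc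
  rw [Finset.sum_congr rfl hterm, ← Finset.mul_sum] at hc
  -- now hc : 2 * (C(1/(m+2)!) * S) = 2X * C(b/(m+2)!) + (1+X) * (0 - C(1/(m+1)!) * Pb (m+1))
  have hfne : ∀ j : ℕ, ((j.factorial : ℚ)) ≠ 0 := fun j => by exact_mod_cast Nat.factorial_ne_zero j
  have hc6 : (Polynomial.C ((2:ℚ) / (m+2).factorial) : Polynomial ℚ) ≠ 0 := by
    have h0 : ((2:ℚ) / (m+2).factorial) ≠ 0 := by positivity
    simpa [Polynomial.C_eq_zero] using h0
  apply mul_left_cancel₀ hc6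
  have h1 : Polynomial.C ((2:ℚ) / (m+2).factorial)
      = 2 * Polynomial.C ((1:ℚ) / (m+2).factorial) := by
    rw [show (2 : Polynomial ℚ) = Polynomial.C 2 from by rw [map_ofNat], ← Polynomial.C_mul]
    congr 1
    ring
  have h2 : Polynomial.C ((2:ℚ) / (m+2).factorial) * Polynomial.C (_root_.bernoulli (m+2))
      = 2 * Polynomial.C (_root_.bernoulli (m+2) / (m+2).factorial) := by
    rw [show (2 : Polynomial ℚ) = Polynomial.C 2 from by rw [map_ofNat], ← Polynomial.C_mul,
      ← Polynomial.C_mul]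
    congr 1
    ring
  have h3 : Polynomial.C ((2:ℚ) / (m+2).factorial) * Polynomial.C (((m+2:ℕ) : ℚ) / 2)
      = Polynomial.C ((1:ℚ) / (m+1).factorial) := by
    rw [← Polynomial.C_mul]
    congr 1
    have : ((m+2).factorial : ℚ) = ((m+2 : ℕ) : ℚ) * ((m+1).factorial : ℚ) := by
      rw [show m + 2 = (m+1) + 1 from rfl, Nat.factorial_succ]
      push_cast
      ring
    rw [this]
    have h4 : ((m + 2 : ℕ) : ℚ) ≠ 0 := by positivity
    field_simp
  push_cast at h3
  push_cast
  linear_combination hc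
    + (∑ k ∈ Finset.range (m + 2 + 1),
        Polynomial.C (((m+2).choose k : ℚ) * _root_.bernoulli k) * Pb (m + 2 - k)) * h1
    - Polynomial.X * h2
    + ((1 + Polynomial.X) * Pb (m + 1)) * h3

lemma sum_range_even_odd {M : Type*} [AddCommMonoid M] (f : ℕ → M) (n : ℕ) :
    ∑ j ∈ Finset.range n, f j
      = (∑ k ∈ Finset.range ((n+1)/2), f (2*k)) + ∑ k ∈ Finset.range (n/2), f (2*k+1) := by
  induction n with
  | zero => simp
  | succ n ih =>
    rw [Finset.sum_range_succ, ih]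
    rcases Nat.even_or_odd n with ⟨t, ht⟩ | ⟨t, ht⟩
    · have h1 : (n+1+1)/2 = t+1 := by omega
      have h2 : (n+1)/2 = t := by omega
      have h3 : n/2 = t := by omega
      rw [h1, h2, h3, Finset.sum_range_succ, show 2*t = n by omega]
      abel
    · have h1 : (n+1+1)/2 = t+1 := by omega
      have h2 : (n+1)/2 = t+1 := by omega
      have h3 : n/2 = t := by omega
      rw [h1, h2, h3, Finset.sum_range_succ (fun k => f (2*k+1)) t,
        show 2*t+1 = n by omega]
      abel

lemma bern_odd_zero {j : ℕ} (h : Odd j) (h1 : 1 < j) : _root_.bernoulli j = 0 := by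
  rw [bernoulli_eq_bernoulli'_of_ne_one (by omega)]
  exact bernoulli'_eq_zero_of_odd h h1

lemma poly_main (i : ℕ) (hi : 2 ≤ i) :
    Polynomial.C ((i:ℚ)/2) * Polynomial.X * Pb (i-1)
      + ∑ k ∈ Finset.range ((i-1)/2 + 1),
          Polynomial.C ((i.choose (2*k) : ℚ) * _root_.bernoulli (2*k)) * Pb (i - 2*k) = 0 := by
  set f : ℕ → Polynomial ℚ :=
    fun j => Polynomial.C ((i.choose j : ℚ) * _root_.bernoulli j) * Pb (i - j) with hf
  have hW := W i hi
  have hsplit := sum_range_even_odd f (i+1)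
  have hodd : (∑ k ∈ Finset.range ((i+1)/2), f (2*k+1))
      = Polynomial.C ((i.choose 1 : ℚ) * _root_.bernoulli 1) * Pb (i-1) := by
    rw [Finset.sum_eq_single_of_mem 0 (Finset.mem_range.mpr (by omega))
      (fun k hk hk0 => by
        have hb : _root_.bernoulli (2*k+1) = 0 := bern_odd_zero ⟨k, by ring⟩ (by omega)
        simp [hf, hb])]
  have hone : Polynomial.C ((i.choose 1 : ℚ) * _root_.bernoulli 1)
      = - Polynomial.C ((i:ℚ)/2) := by
    rw [show ((i.choose 1 : ℚ) * _root_.bernoulli 1) = -((i:ℚ)/2) by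
      rw [_root_.bernoulli_one, Nat.choose_one_right]; ring, map_neg]
  have hWsum : (∑ j ∈ Finset.range (i+1), f j) = ∑ j ∈ Finset.range (i+1),
      Polynomial.C ((i.choose j : ℚ) * _root_.bernoulli j) * Pb (i - j) := rfl
  rcases Nat.even_or_odd i with ⟨t, ht⟩ | ⟨t, ht⟩
  · -- i even
    have h1 : (i+1+1)/2 = (i-1)/2 + 2 := by omega
    have heven : (∑ k ∈ Finset.range ((i+1+1)/2), f (2*k))
        = (∑ k ∈ Finset.range ((i-1)/2 + 1), f (2*k)) + f i := by
      rw [h1, Finset.sum_range_succ, show 2*((i-1)/2+1) = i by omega]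
    have hfi : f i = Polynomial.C (_root_.bernoulli i) * Polynomial.X := by
      simp [hf, Nat.choose_self, show Pb 0 = Polynomial.X from rfl, Nat.sub_self]
    rw [hWsum] at hsplit
    rw [heven, hodd, hone, hfi] at hsplit
    rw [hW] at hsplit
    have hthis : (∑ k ∈ Finset.range ((i-1)/2 + 1), f (2*k))
        = - (Polynomial.C ((i:ℚ)/2) * Polynomial.X * Pb (i-1)) := by
      linear_combination -hsplit
    have hgoal : (∑ k ∈ Finset.range ((i-1)/2 + 1),
        Polynomial.C ((i.choose (2*k) : ℚ) * _root_.bernoulli (2*k)) * Pb (i - 2*k))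
        = ∑ k ∈ Finset.range ((i-1)/2 + 1), f (2*k) := rfl
    rw [hgoal, hthis]
    ring
  · -- i odd
    have h1 : (i+1+1)/2 = (i-1)/2 + 1 := by omega
    have hbi : _root_.bernoulli i = 0 := bern_odd_zero ⟨t, by omega⟩ (by omega)
    rw [hWsum] at hsplit
    rw [h1, hodd, hone, hW, hbi] at hsplit
    simp only [map_zero] at hsplit
    have hthis : (∑ k ∈ Finset.range ((i-1)/2 + 1), f (2*k))
        = - (Polynomial.C ((i:ℚ)/2) * Polynomial.X * Pb (i-1)) := by
      linear_combination -hsplit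
    have hgoal : (∑ k ∈ Finset.range ((i-1)/2 + 1),
        Polynomial.C ((i.choose (2*k) : ℚ) * _root_.bernoulli (2*k)) * Pb (i - 2*k))
        = ∑ k ∈ Finset.range ((i-1)/2 + 1), f (2*k) := rfl
    rw [hgoal, hthis]
    ring

lemma iter_eq (a b : ℝ) (g : ℝ → ℝ) (hg : ContDiffOn ℝ (⊤ : ℕ∞) g (Set.Ioo a b))
    (hode : ∀ x ∈ Set.Ioo a b, 2 * deriv g x = 1 - g x ^ 2) (n : ℕ) :
    ∀ x ∈ Set.Ioo a b, iteratedDeriv n g x = Polynomial.aeval (g x) (Pb n) := by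
  induction n with
  | zero =>
    intro x hx
    simp [iteratedDeriv_zero, show Pb 0 = Polynomial.X from rfl]
  | succ n ih =>
    intro x hx
    rw [iteratedDeriv_succ]
    have hev : (iteratedDeriv n g) =ᶠ[nhds x] fun y => Polynomial.aeval (g y) (Pb n) :=
      Filter.eventuallyEq_of_mem (isOpen_Ioo.mem_nhds hx) ih
    rw [hev.deriv_eq]
    have hgd : HasDerivAt g ((1 - g x ^ 2) / 2) x := by
      have hd : DifferentiableAt ℝ g x :=
        ((hg.contDiffAt (isOpen_Ioo.mem_nhds hx)).differentiableAt (by simp))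
      have hda := hd.hasDerivAt
      have heq : deriv g x = (1 - g x ^ 2) / 2 := by linarith [hode x hx]
      rwa [heq] at hda
    set q : Polynomial ℝ := (Pb n).map (algebraMap ℚ ℝ) with hq
    have h1 : (fun y => Polynomial.aeval (g y) (Pb n)) = fun y => q.eval (g y) := by
      funext y
      rw [hq, Polynomial.eval_map, Polynomial.aeval_def]
    rw [h1]
    have hcomp : HasDerivAt (fun y => q.eval (g y))
        (q.derivative.eval (g x) * ((1 - g x ^ 2) / 2)) x :=
      (q.hasDerivAt (g x)).comp x hgd
    rw [hcomp.deriv]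
    rw [show Pb (n+1) = Polynomial.C (2⁻¹ : ℚ) *
      ((1 - Polynomial.X ^ 2) * Polynomial.derivative (Pb n)) from rfl]
    rw [map_mul, map_mul, Polynomial.aeval_C, map_sub, map_one, map_pow, Polynomial.aeval_X]
    have h2 : q.derivative.eval (g x) = Polynomial.aeval (g x) (Polynomial.derivative (Pb n)) := by
      rw [hq, Polynomial.derivative_map, Polynomial.eval_map, Polynomial.aeval_def]
    rw [h2]
    have h3 : (algebraMap ℚ ℝ) (2⁻¹ : ℚ) = (2:ℝ)⁻¹ := by
      rw [eq_ratCast]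
      norm_num
    rw [h3]
    ring


end Aux



/-- If `g` is smooth on an open interval and satisfies `2g' = 1 - g²` there, then for
every `i ≥ 2`, on that interval
`(i/2) g g^{(i-1)} + ∑_{k=0}^{⌊(i-1)/2⌋} C(i,2k) B_{2k} g^{(i-2k)} = 0`. -/
theorem stmt2 (a b : ℝ) (g : ℝ → ℝ)
    (hg : ContDiffOn ℝ (⊤ : ℕ∞) g (Set.Ioo a b))
    (hode : ∀ x ∈ Set.Ioo a b, 2 * deriv g x = 1 - g x ^ 2)
    (i : ℕ) (hi : 2 ≤ i) :
    ∀ x ∈ Set.Ioo a b,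
      (i : ℝ) / 2 * g x * iteratedDeriv (i - 1) g x
        + ∑ k ∈ Finset.range ((i - 1) / 2 + 1),
            (i.choose (2 * k) : ℝ) * ((bernoulli (2 * k) : ℚ) : ℝ) *
              iteratedDeriv (i - 2 * k) g x
        = 0 := by
  intro x hx
  have hit : ∀ n, iteratedDeriv n g x = Polynomial.aeval (g x) (Pb n) :=
    fun n => iter_eq a b g hg hode n x hx
  have key := congrArg (Polynomial.aeval (g x)) (poly_main i hi)
  rw [map_add, map_zero, map_mul, map_mul, Polynomial.aeval_C, Polynomial.aeval_X,
    map_sum] at key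
  have hsum : ∀ k ∈ Finset.range ((i - 1) / 2 + 1),
      Polynomial.aeval (g x) (Polynomial.C ((i.choose (2*k) : ℚ) * _root_.bernoulli (2*k))
          * Pb (i - 2*k))
        = (i.choose (2 * k) : ℝ) * ((_root_.bernoulli (2 * k) : ℚ) : ℝ) *
            iteratedDeriv (i - 2 * k) g x := by
    intro k _
    rw [map_mul, Polynomial.aeval_C, hit (i - 2*k), eq_ratCast]
    push_cast
    ring
  rw [Finset.sum_congr rfl hsum] at key
  rw [eq_ratCast] at key
  rw [hit (i-1)]
  push_cast at key
  linarith [key]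
end

section
/- Let $N \ge 4$ be an even integer and let $0 \le i \le N/2 - 1$. Writing $\beta_{2k} := B_{2k}/(2k)!$, the following Bernoulli number identity holds: $\sum_{k=0}^{N/2 - 1 - \lfloor i/2 \rfloor} \beta_{2k}\,\beta_{N-2k}\binom{N-2k}{i} + \sum_{l=0}^{\lfloor i/2 \rfloor} \beta_{2l}\,\beta_{N-2l}\binom{N-2l}{i-2l+1} = 0$. -/
/-!
With `f t = t / (e^t - 1)`, each of `a t`, `b t`, `(a + b) t` equals `f (·) (e^(·) - 1)` at that
argument, and `e^(a t) e^(b t) = e^((a + b) t)`; this yields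
`f ((a + b) t) (a b t² + a t f (b t) + b t f (a t)) = (a + b) t f (a t) f (b t)`.
The coefficient of `t^(N+1)` is homogeneous in `a, b`, so its coefficient of `a^(i+1)` can be read
off at `b = 1`; this gives a convolution identity for `β n = B_n / n!`. For even `N ≥ 4` we have
`β (N - 1) = 0` and every product `β k β (N - k)` with `k` odd vanishes, so only even indices
survive, and the two terms by which the full sums exceed those of the theorem cancel the
right-hand side.
-/

open PowerSeries Finset

local notation "β" n:max => (bernoulli n / (Nat.factorial n : ℚ))

section
variable {A : Type*} [CommRing A] [Algebra ℚ A]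

theorem rescale_bernoulliPowerSeries_mul_exp_sub_one (a : A) :
    rescale a (bernoulliPowerSeries A) * (rescale a (exp A) - 1) = C a * X := by
  simpa [rescale_X] using congrArg (rescale a) (bernoulliPowerSeries_mul_exp_sub_one A)

theorem rescale_add_bernoulliPowerSeries_mul (a b : A) :
    X ^ 2 * C (a * b) * rescale (a + b) (bernoulliPowerSeries A)
      + X * C a * rescale b (bernoulliPowerSeries A) * rescale (a + b) (bernoulliPowerSeries A)
      + X * C b * rescale a (bernoulliPowerSeries A) * rescale (a + b) (bernoulliPowerSeries A) =
      X * C (a + b) * rescale a (bernoulliPowerSeries A) * rescale b (bernoulliPowerSeries A) := by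
  have ha := rescale_bernoulliPowerSeries_mul_exp_sub_one a
  have hb := rescale_bernoulliPowerSeries_mul_exp_sub_one b
  have hab := rescale_bernoulliPowerSeries_mul_exp_sub_one (a + b)
  rw [← exp_mul_exp_eq_exp_add, map_add C] at hab
  rw [map_mul C, map_add C]
  linear_combination (rescale a (bernoulliPowerSeries A) * rescale b (bernoulliPowerSeries A)) * hab
    - (rescale (a + b) (bernoulliPowerSeries A) *
        (rescale b (bernoulliPowerSeries A) + C b * X)) * ha
    - (rescale (a + b) (bernoulliPowerSeries A) * rescale a (bernoulliPowerSeries A) *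
        rescale a (exp A)) * hb

theorem coeff_rescale_bernoulliPowerSeries (a : A) (k : ℕ) :
    coeff k (rescale a (bernoulliPowerSeries A)) = algebraMap ℚ A (β k) * a ^ k := by
  rw [coeff_rescale, bernoulliPowerSeries, coeff_mk, mul_comm]

theorem coeff_rescale_bernoulliPowerSeries_mul (a b : A) (m : ℕ) :
    coeff m (rescale a (bernoulliPowerSeries A) * rescale b (bernoulliPowerSeries A)) =
      ∑ k ∈ range (m + 1), algebraMap ℚ A (β k * β (m - k)) * (a ^ k * b ^ (m - k)) := by
  rw [coeff_mul, Nat.sum_antidiagonal_eq_sum_range_succ_mk]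
  refine sum_congr rfl fun k _ => ?_
  simp only [coeff_rescale_bernoulliPowerSeries, map_mul]
  ring

theorem sum_bernoulli_mul_add_pow (a b : A) (n : ℕ) :
    a * b * (algebraMap ℚ A (β n) * (a + b) ^ n)
      + a * ∑ k ∈ range (n + 2),
          algebraMap ℚ A (β k * β (n + 1 - k)) * (b ^ k * (a + b) ^ (n + 1 - k))
      + b * ∑ k ∈ range (n + 2),
          algebraMap ℚ A (β k * β (n + 1 - k)) * (a ^ k * (a + b) ^ (n + 1 - k))
      = (a + b) * ∑ k ∈ range (n + 2),
          algebraMap ℚ A (β k * β (n + 1 - k)) * (a ^ k * b ^ (n + 1 - k)) := by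
  have h := congrArg (coeff (n + 2)) (rescale_add_bernoulliPowerSeries_mul a b)
  simpa only [mul_assoc, map_add, add_mul, coeff_X_pow_mul, coeff_succ_X_mul, coeff_C_mul,
    coeff_rescale_bernoulliPowerSeries, coeff_rescale_bernoulliPowerSeries_mul] using h

end

theorem sum_bernoulli_mul_bernoulli_choose (N i : ℕ) (hi : i < N) :
    β (N - 1) * (N - 1).choose i + ∑ k ∈ range (N + 1), β k * β (N - k) * (N - k).choose i
      + ∑ k ∈ range (i + 2), β k * β (N - k) * (N - k).choose (i + 1 - k)
      = β i * β (N - i) + β (i + 1) * β (N - (i + 1)) := by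
  obtain ⟨n, rfl⟩ : ∃ n, N = n + 1 := ⟨N - 1, by omega⟩
  have h := congrArg (fun p : Polynomial ℚ => p.coeff (i + 1))
    (sum_bernoulli_mul_add_pow (Polynomial.X : Polynomial ℚ) 1 n)
  simp only [Polynomial.algebraMap_eq, mul_one, one_mul, one_pow, add_mul, Polynomial.coeff_add,
    Polynomial.coeff_X_mul, Polynomial.coeff_C_mul, Polynomial.finsetSum_coeff,
    Polynomial.coeff_X_add_one_pow, Polynomial.coeff_X_pow_mul', Polynomial.coeff_X_pow,
    mul_ite, mul_zero, sum_ite_eq, ← sum_filter] at h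
  have hfilter : (range (n + 2)).filter (· ≤ i + 1) = range (i + 2) := by
    ext k
    simp only [mem_filter, mem_range]
    omega
  rwa [hfilter, if_pos (mem_range.2 (by omega)), if_pos (mem_range.2 (by omega))] at h

theorem sum_range_half_eq_sum_range {M : Type*} [AddCommMonoid M] (f : ℕ → M)
    (hf : ∀ k, Odd k → f k = 0) (m : ℕ) :
    ∑ k ∈ range ((m + 1) / 2), f (2 * k) = ∑ k ∈ range m, f k := by
  induction m with
  | zero => simp
  | succ m ih =>
    rw [sum_range_succ, ← ih]
    rcases Nat.even_or_odd m with ⟨j, rfl⟩ | hm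
    · rw [show (j + j + 1 + 1) / 2 = (j + j + 1) / 2 + 1 by omega, sum_range_succ,
        show 2 * ((j + j + 1) / 2) = j + j by omega]
    · obtain ⟨j, rfl⟩ := hm
      rw [hf _ ⟨j, rfl⟩, add_zero, show (2 * j + 1 + 1 + 1) / 2 = (2 * j + 1 + 1) / 2 by omega]

theorem bernoulli_div_factorial_mul_eq_zero_of_odd {N k : ℕ} (hN : 2 < N) (hNe : Even N)
    (hk : Odd k) : β k * β (N - k) = 0 := by
  obtain rfl | hk1 : k = 1 ∨ 1 < k := by have := hk.pos; omega
  · have : Odd (N - 1) := Nat.Even.sub_odd (by omega) hNe odd_one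
    rw [bernoulli_eq_zero_of_odd this (by omega), zero_div, mul_zero]
  · rw [bernoulli_eq_zero_of_odd hk hk1, zero_div, zero_mul]

theorem sum_range_half_bernoulli_choose {N : ℕ} (hN : 2 < N) (hNe : Even N) {i : ℕ}
    (hi : i < N) :
    ∑ k ∈ range (N / 2 - 1 - i / 2 + 1), β (2 * k) * β (N - 2 * k) * (N - 2 * k).choose i
      + β i * β (N - i) = ∑ k ∈ range (N + 1), β k * β (N - k) * (N - k).choose i := by
  rw [show N / 2 - 1 - i / 2 + 1 = (N - i + 1) / 2 by obtain ⟨m, rfl⟩ := hNe; omega,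
    sum_range_half_eq_sum_range (fun k => β k * β (N - k) * (N - k).choose i)
      fun k hk => by rw [bernoulli_div_factorial_mul_eq_zero_of_odd hN hNe hk, zero_mul]]
  have htail : ∀ k ∈ range (N + 1), k ∉ range (N - i + 1) →
      β k * β (N - k) * ((N - k).choose i : ℚ) = 0 := fun k hkN hk => by
    simp only [mem_range] at hkN hk
    rw [Nat.choose_eq_zero_of_lt (show N - k < i by omega), Nat.cast_zero, mul_zero]
  rw [← sum_subset (range_subset_range.2 (show N - i + 1 ≤ N + 1 by omega)) htail,
    sum_range_succ, show N - (N - i) = i by omega, Nat.choose_self, Nat.cast_one, mul_one,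
    mul_comm (β i)]

theorem sum_range_half_bernoulli_choose_succ_sub {N : ℕ} (hN : 2 < N) (hNe : Even N) (i : ℕ) :
    ∑ l ∈ range (i / 2 + 1), β (2 * l) * β (N - 2 * l) * (N - 2 * l).choose (i - 2 * l + 1)
      + β (i + 1) * β (N - (i + 1))
      = ∑ k ∈ range (i + 2), β k * β (N - k) * (N - k).choose (i + 1 - k) := by
  have hsub : ∀ l ∈ range (i / 2 + 1), i - 2 * l + 1 = i + 1 - 2 * l := fun l hl => by
    simp only [mem_range] at hl; omega
  rw [sum_congr rfl fun l hl => by rw [hsub l hl], show i / 2 + 1 = (i + 1 + 1) / 2 by omega,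
    sum_range_half_eq_sum_range (fun k => β k * β (N - k) * (N - k).choose (i + 1 - k))
      fun k hk => by rw [bernoulli_div_factorial_mul_eq_zero_of_odd hN hNe hk, zero_mul],
    sum_range_succ _ (i + 1), Nat.sub_self, Nat.choose_zero_right, Nat.cast_one, mul_one]

/-- For even `N ≥ 4` and `0 ≤ i ≤ N/2 - 1`, writing `β_{2k} = B_{2k}/(2k)!`,
`∑_{k=0}^{N/2-1-⌊i/2⌋} β_{2k} β_{N-2k} C(N-2k, i)
  + ∑_{l=0}^{⌊i/2⌋} β_{2l} β_{N-2l} C(N-2l, i-2l+1) = 0`. -/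
theorem stmt3 (N : ℕ) (hN : 4 ≤ N) (hNe : Even N) (i : ℕ) (hi : i ≤ N / 2 - 1) :
    ∑ k ∈ Finset.range (N / 2 - 1 - i / 2 + 1),
        (bernoulli (2 * k) / (2 * k).factorial) *
          (bernoulli (N - 2 * k) / (N - 2 * k).factorial) * ((N - 2 * k).choose i)
      + ∑ l ∈ Finset.range (i / 2 + 1),
          (bernoulli (2 * l) / (2 * l).factorial) *
            (bernoulli (N - 2 * l) / (N - 2 * l).factorial) *
              ((N - 2 * l).choose (i - 2 * l + 1))
      = 0 := by
  have hiN : i < N := by omega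
  have hβ : β (N - 1) = 0 := by
    rw [bernoulli_eq_zero_of_odd (Nat.Even.sub_odd (by omega) hNe odd_one) (by omega), zero_div]
  have key := sum_bernoulli_mul_bernoulli_choose N i hiN
  rw [hβ, zero_mul, zero_add, ← sum_range_half_bernoulli_choose (by omega) hNe hiN,
    ← sum_range_half_bernoulli_choose_succ_sub (by omega) hNe i] at key
  linarith
end

section
/- For every natural number $n$, the following identity holds in the polynomial ring $\mathbb{Q}[L,R]$ in two commuting variables: $(L-R)\,R^n = \sum_{k=0}^{n} \frac{a^{(n)}_k}{k+1}\,(L^{k+1} - R^{k+1})\,(L-R)^{n-k}$, where $a^{(n)}_k = \binom{n}{k} B_{n-k}$. -/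
/-!
Dehomogenising at `d = L - R`, `x = R / d`, the identity becomes
`∑ₖ C(n,k) B_{n-k} ((x+1)^{k+1} - x^{k+1}) / (k+1) = x^n`, which after `C(n,k)/(k+1) = C(n+1,k+1)/(n+1)`
is the difference equation `B_{n+1}(x+1) - B_{n+1}(x) = (n+1) x^n` of the Bernoulli polynomials.
Since `ℚ` is infinite, it suffices to check the identity at every point of `ℚ²`.
-/

open MvPolynomial Finset

theorem Polynomial.bernoulli_eval_eq_sum (n : ℕ) (x : ℚ) :
    (Polynomial.bernoulli n).eval x
      = ∑ i ∈ range (n + 1), _root_.bernoulli (n - i) * n.choose i * x ^ i := by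
  simp [Polynomial.bernoulli_def, Polynomial.eval_finsetSum]

theorem sum_choose_mul_bernoulli_mul_sub_pow (n : ℕ) (x : ℚ) :
    ∑ k ∈ range (n + 1),
      (n.choose k : ℚ) * bernoulli (n - k) / (k + 1) * ((x + 1) ^ (k + 1) - x ^ (k + 1))
      = x ^ n := by
  have hterm (k : ℕ) : (n + 1 : ℚ) * ((n.choose k : ℚ) * bernoulli (n - k) / (k + 1)) =
      bernoulli (n + 1 - (k + 1)) * (n + 1).choose (k + 1) := by
    have hchoose : ((n + 1) * n.choose k : ℚ) = (n + 1).choose (k + 1) * (k + 1) := by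
      exact_mod_cast Nat.add_one_mul_choose_eq n k
    rw [Nat.add_sub_add_right]
    field_simp
    linear_combination bernoulli (n - k) * hchoose
  have hdiff := Polynomial.bernoulli_eval_one_add (n + 1) x
  rw [Polynomial.bernoulli_eval_eq_sum, Polynomial.bernoulli_eval_eq_sum, add_comm 1 x,
    ← sub_eq_iff_eq_add', ← sum_sub_distrib, sum_range_succ'] at hdiff
  refine mul_left_cancel₀ (show (n + 1 : ℚ) ≠ 0 by positivity) ?_
  rw [mul_sum]
  simp only [← mul_assoc, hterm, mul_sub]
  push_cast at hdiff
  simpa using hdiff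

theorem sub_mul_pow_eq_sum_bernoulli (n : ℕ) (l r : ℚ) :
    (l - r) * r ^ n
      = ∑ k ∈ range (n + 1),
          (n.choose k : ℚ) * bernoulli (n - k) / (k + 1) *
            ((l ^ (k + 1) - r ^ (k + 1)) * (l - r) ^ (n - k)) := by
  obtain ⟨d, rfl⟩ : ∃ d, l = r + d := ⟨l - r, by ring⟩
  obtain rfl | hd := eq_or_ne d 0
  · simp
  obtain ⟨x, rfl⟩ : ∃ x, r = x * d := ⟨r / d, (div_mul_cancel₀ r hd).symm⟩
  have hterm (k : ℕ) (hk : k ∈ range (n + 1)) :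
      (n.choose k : ℚ) * bernoulli (n - k) / (k + 1) *
          (((x * d + d) ^ (k + 1) - (x * d) ^ (k + 1)) * d ^ (n - k))
        = (n.choose k : ℚ) * bernoulli (n - k) / (k + 1) *
            ((x + 1) ^ (k + 1) - x ^ (k + 1)) * d ^ (n + 1) := by
    have hpow : d ^ (n + 1) = d ^ (k + 1) * d ^ (n - k) := by
      rw [← pow_add, show k + 1 + (n - k) = n + 1 by grind]
    rw [hpow, show x * d + d = (x + 1) * d by ring, mul_pow, mul_pow]
    ring
  simp only [add_sub_cancel_left]
  rw [sum_congr rfl hterm, ← sum_mul, sum_choose_mul_bernoulli_mul_sub_pow]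
  ring

/-- In `ℚ[L,R]` (two commuting variables), with `a^{(n)}_k = C(n,k) B_{n-k}`:
`(L-R) R^n = ∑_{k=0}^n (a^{(n)}_k/(k+1)) (L^{k+1} - R^{k+1}) (L-R)^{n-k}`. -/
theorem stmt5 (n : ℕ) :
    let L : MvPolynomial Bool ℚ := X true
    let R : MvPolynomial Bool ℚ := X false
    (L - R) * R ^ n
      = ∑ k ∈ Finset.range (n + 1),
          C ((n.choose k : ℚ) * bernoulli (n - k) / (k + 1)) *
            ((L ^ (k + 1) - R ^ (k + 1)) * (L - R) ^ (n - k)) := by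
  intro L R
  refine MvPolynomial.funext fun v => ?_
  simpa [L, R] using sub_mul_pow_eq_sum_bernoulli n (v true) (v false)
end

section
/- Fix an integer $N \ge 1$. Let $F$ be the free $\mathbb{Q}$-vector space on symbols $F^{l,m,k}$ indexed by triples of natural numbers with $l + m + k + 1 = N$, and let $I \subset F$ be the subspace spanned by all elements $F^{l,m,k} - F^{m,l,k}$ and all elements $F^{l,m+1,k} + F^{l+1,m,k} - F^{l,m,k+1}$ (for indices in range). Then the quotient space $F/I$ has dimension $\lceil N/2 \rceil$ over $\mathbb{Q}$. -/
/-!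
Send `F^{l,m,k}` to the binary form `x^l y^m (x+y)^k` of degree `N - 1`. The second family of
relations then holds identically, and the first one holds after identifying each form with its
image under `x ↔ y`; so the quotient maps onto the coinvariants of `x ↔ y`, whose dimension is
the number `⌈N/2⌉` of orbits of the monomials `x^a y^(N-1-a)`. Conversely, the relations reduce
every `F^{l,m,k}` to a combination of the `⌈N/2⌉` classes `F^{i,N-1-i,0}` with `2 i < N`.
-/

open Polynomial Finset

section CoeffSum

variable {R V : Type*} [Semiring R] [AddCommMonoid V] [Module R V]

noncomputable def coeffSum (n : ℕ) (b : ℕ → V) : R[X] →ₗ[R] V :=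
  ∑ a ∈ range (n + 1), (lcoeff R a).smulRight (b a)

variable {n : ℕ} {b : ℕ → V}

lemma coeffSum_apply (p : R[X]) : coeffSum n b p = ∑ a ∈ range (n + 1), p.coeff a • b a := by
  simp [coeffSum]

lemma coeffSum_X_pow {i : ℕ} (hi : i ≤ n) : coeffSum n b (X ^ i : R[X]) = b i := by
  rw [coeffSum_apply, Finset.sum_eq_single_of_mem i (by simpa [Nat.lt_succ_iff])]
  · simp
  · intro a _ ha
    simp [coeff_X_pow, ha]

lemma coeffSum_reflect (hb : ∀ a ≤ n, b (n - a) = b a) (p : R[X]) :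
    coeffSum n b (reflect n p) = coeffSum n b p := by
  rw [coeffSum_apply, coeffSum_apply, ← Finset.sum_range_reflect]
  refine Finset.sum_congr rfl fun a ha => ?_
  have ha : a ≤ n := Nat.lt_succ_iff.mp (Finset.mem_range.mp ha)
  rw [coeff_reflect, revAt_le (by omega), show n + 1 - 1 - a = n - a by omega,
    Nat.sub_sub_self ha, hb a ha]

end CoeffSum

lemma natDegree_one_add_X_pow_le {R : Type*} [Semiring R] (k : ℕ) :
    ((1 + X : R[X]) ^ k).natDegree ≤ k := by
  compute_degree

lemma reflect_one_add_X_pow {R : Type*} [Semiring R] (k : ℕ) :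
    reflect k ((1 + X : R[X]) ^ k) = (1 + X) ^ k := by
  induction k with
  | zero => simp
  | succ k ih =>
    rw [pow_succ, reflect_mul _ _ (natDegree_one_add_X_pow_le k)
      (by simpa using natDegree_one_add_X_pow_le (R := R) 1), ih]
    simp [reflect_add, reflect_one, add_comm]

lemma reflect_X_pow_mul_one_add_X_pow {R : Type*} [Semiring R] (l m k : ℕ) :
    reflect (l + m + k) (X ^ l * (1 + X : R[X]) ^ k) = X ^ m * (1 + X) ^ k := by
  rw [reflect_mul _ _ (natDegree_X_pow_le l |>.trans (Nat.le_add_right l m))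
    (natDegree_one_add_X_pow_le k), reflect_monomial, revAt_le (by omega),
    Nat.add_sub_cancel_left, reflect_one_add_X_pow]

namespace StarTensor

variable (N : ℕ)

abbrev Index := {p : ℕ × ℕ × ℕ // p.1 + p.2.1 + p.2.2 + 1 = N}

def relations : Set (Index N →₀ ℚ) :=
  { v : Index N →₀ ℚ |
    (∃ (l m k : ℕ) (h : l + m + k + 1 = N) (h' : m + l + k + 1 = N),
      v = Finsupp.single ⟨(l, m, k), h⟩ 1 - Finsupp.single ⟨(m, l, k), h'⟩ 1) ∨
    (∃ (l m k : ℕ) (h1 : l + (m + 1) + k + 1 = N)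
        (h2 : (l + 1) + m + k + 1 = N) (h3 : l + m + (k + 1) + 1 = N),
      v = Finsupp.single ⟨(l, m + 1, k), h1⟩ 1
            + Finsupp.single ⟨(l + 1, m, k), h2⟩ 1
            - Finsupp.single ⟨(l, m, k + 1), h3⟩ 1) }

abbrev ZF := (Index N →₀ ℚ) ⧸ Submodule.span ℚ (relations N)

-- `F^{l,m,k}` goes to `x^l y^m (x+y)^k`, dehomogenized at `y = 1`.
noncomputable def toPoly : (Index N →₀ ℚ) →ₗ[ℚ] ℚ[X] :=
  Finsupp.linearCombination ℚ fun p => X ^ p.1.1 * (1 + X) ^ p.1.2.2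

lemma toPoly_single {l m k : ℕ} (h : l + m + k + 1 = N) :
    toPoly N (Finsupp.single ⟨(l, m, k), h⟩ 1) = X ^ l * (1 + X) ^ k := by
  simp [toPoly]

-- The basis vector indexed by the orbit of `a` under `a ↦ N - 1 - a`; the `else` branch is
-- never taken for `a < N`.
noncomputable def orbitVec (a : ℕ) : Fin ((N + 1) / 2) → ℚ :=
  if ha : min a (N - 1 - a) < (N + 1) / 2 then Pi.single ⟨min a (N - 1 - a), ha⟩ 1 else 0

lemma orbitVec_sub (a : ℕ) (ha : a ≤ N - 1) : orbitVec N (N - 1 - a) = orbitVec N a := by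
  unfold orbitVec
  rw [Nat.sub_sub_self ha, min_comm]

lemma orbitVec_of_lt {i : ℕ} (hi : i < (N + 1) / 2) : orbitVec N i = Pi.single ⟨i, hi⟩ 1 := by
  have hmin : min i (N - 1 - i) = i := by omega
  simp only [orbitVec, hmin, dif_pos hi]

noncomputable def invariant : (Index N →₀ ℚ) →ₗ[ℚ] Fin ((N + 1) / 2) → ℚ :=
  coeffSum (N - 1) (orbitVec N) ∘ₗ toPoly N

lemma span_relations_le_ker_invariant :
    Submodule.span ℚ (relations N) ≤ LinearMap.ker (invariant N) := by
  rw [Submodule.span_le]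
  rintro v (⟨l, m, k, h, h', rfl⟩ | ⟨l, m, k, h1, h2, h3, rfl⟩) <;>
    simp only [SetLike.mem_coe, LinearMap.mem_ker, invariant, LinearMap.comp_apply, map_sub,
      map_add, toPoly_single, sub_eq_zero]
  · rw [← coeffSum_reflect (orbitVec_sub N), show N - 1 = l + m + k by omega,
      reflect_X_pow_mul_one_add_X_pow]
  · rw [← map_add]
    congr 1
    ring

variable {N}

noncomputable def F (l m k : ℕ) (h : l + m + k + 1 = N) : ZF N :=
  Submodule.Quotient.mk (Finsupp.single ⟨(l, m, k), h⟩ 1)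

lemma F_swap {l m k : ℕ} (h : l + m + k + 1 = N) :
    F l m k h = F m l k (by omega) :=
  (Submodule.Quotient.eq _).2 <| Submodule.subset_span <| Or.inl ⟨l, m, k, h, _, rfl⟩

lemma F_succ {l m k : ℕ} (h : l + m + (k + 1) + 1 = N) :
    F l m (k + 1) h = F l (m + 1) k (by omega) + F (l + 1) m k (by omega) := by
  refine ((Submodule.Quotient.eq _).2 ?_).trans (Submodule.Quotient.mk_add _)
  rw [← neg_mem_iff, neg_sub]
  exact Submodule.subset_span <| Or.inr ⟨l, m, k, _, _, h, rfl⟩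

variable (N)

noncomputable def ofCoords : (Fin ((N + 1) / 2) → ℚ) →ₗ[ℚ] ZF N :=
  Fintype.linearCombination ℚ fun i => F i (N - 1 - i) 0 (by omega)

variable {N}

lemma F_mem_range_ofCoords (k : ℕ) :
    ∀ (l m : ℕ) (h : l + m + k + 1 = N), F l m k h ∈ LinearMap.range (ofCoords N) := by
  induction k with
  | zero =>
    have hdiag : ∀ l m (h : l + m + 0 + 1 = N), l ≤ m →
        F l m 0 h ∈ LinearMap.range (ofCoords N) := by
      intro l m h hlm
      refine ⟨Pi.single ⟨l, by omega⟩ 1, ?_⟩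
      simp only [ofCoords, Fintype.linearCombination_apply_single, one_smul]
      congr 1
      omega
    intro l m h
    rcases le_total l m with hlm | hml
    · exact hdiag l m h hlm
    · rw [F_swap]
      exact hdiag m l _ hml
  | succ k ih =>
    intro l m h
    rw [F_succ]
    exact add_mem (ih _ _ _) (ih _ _ _)

variable (N)

lemma ofCoords_surjective : Function.Surjective (ofCoords N) := by
  intro x
  obtain ⟨y, rfl⟩ := Submodule.Quotient.mk_surjective _ x
  suffices Submodule.Quotient.mk y ∈ LinearMap.range (ofCoords N) from this
  induction y using Finsupp.induction_linear with
  | zero => exact zero_mem _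
  | add f g hf hg => exact add_mem hf hg
  | single p q =>
    rw [← mul_one q, ← Finsupp.smul_single', Submodule.Quotient.mk_smul]
    exact Submodule.smul_mem _ q (F_mem_range_ofCoords p.1.2.2 p.1.1 p.1.2.1 p.2)

lemma invariant_liftQ_comp_ofCoords :
    (Submodule.span ℚ (relations N)).liftQ (invariant N) (span_relations_le_ker_invariant N)
      ∘ₗ ofCoords N = LinearMap.id := by
  refine (Pi.basisFun ℚ _).ext fun i => ?_
  have hi := i.2
  simp only [Pi.basisFun_apply, LinearMap.comp_apply, ofCoords,
    Fintype.linearCombination_apply_single, one_smul, F, Submodule.liftQ_apply, invariant,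
    toPoly_single, pow_zero, mul_one, coeffSum_X_pow (show (i : ℕ) ≤ N - 1 by omega),
    orbitVec_of_lt N hi, LinearMap.id_apply]

lemma ofCoords_injective : Function.Injective (ofCoords N) :=
  Function.HasLeftInverse.injective ⟨_, LinearMap.congr_fun (invariant_liftQ_comp_ofCoords N)⟩

lemma finrank_ZF : Module.finrank ℚ (ZF N) = (N + 1) / 2 := by
  rw [← (LinearEquiv.ofBijective _ ⟨ofCoords_injective N, ofCoords_surjective N⟩).finrank_eq,
    Module.finrank_fin_fun]

end StarTensor

theorem stmt9_general (N : ℕ) :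
    Module.finrank ℚ
      ((({p : ℕ × ℕ × ℕ // p.1 + p.2.1 + p.2.2 + 1 = N} →₀ ℚ)) ⧸
        (Submodule.span ℚ
          { v : {p : ℕ × ℕ × ℕ // p.1 + p.2.1 + p.2.2 + 1 = N} →₀ ℚ |
            (∃ (l m k : ℕ) (h : l + m + k + 1 = N) (h' : m + l + k + 1 = N),
              v = Finsupp.single ⟨(l, m, k), h⟩ 1 - Finsupp.single ⟨(m, l, k), h'⟩ 1) ∨
            (∃ (l m k : ℕ) (h1 : l + (m + 1) + k + 1 = N)
                (h2 : (l + 1) + m + k + 1 = N) (h3 : l + m + (k + 1) + 1 = N),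
              v = Finsupp.single ⟨(l, m + 1, k), h1⟩ 1
                    + Finsupp.single ⟨(l + 1, m, k), h2⟩ 1
                    - Finsupp.single ⟨(l, m, k + 1), h3⟩ 1) }))
      = (N + 1) / 2 :=
  StarTensor.finrank_ZF N

/-- For `N ≥ 1`, the free `ℚ`-vector space on symbols `F^{l,m,k}` with `l+m+k+1 = N`,
modulo the symmetries `F^{l,m,k} - F^{m,l,k}` and relations
`F^{l,m+1,k} + F^{l+1,m,k} - F^{l,m,k+1}`, has dimension `⌈N/2⌉`. -/
theorem stmt9 (N : ℕ) (hN : 1 ≤ N) :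
    Module.finrank ℚ
      ((({p : ℕ × ℕ × ℕ // p.1 + p.2.1 + p.2.2 + 1 = N} →₀ ℚ)) ⧸
        (Submodule.span ℚ
          { v : {p : ℕ × ℕ × ℕ // p.1 + p.2.1 + p.2.2 + 1 = N} →₀ ℚ |
            (∃ (l m k : ℕ) (h : l + m + k + 1 = N) (h' : m + l + k + 1 = N),
              v = Finsupp.single ⟨(l, m, k), h⟩ 1 - Finsupp.single ⟨(m, l, k), h'⟩ 1) ∨
            (∃ (l m k : ℕ) (h1 : l + (m + 1) + k + 1 = N)
                (h2 : (l + 1) + m + k + 1 = N) (h3 : l + m + (k + 1) + 1 = N),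
              v = Finsupp.single ⟨(l, m + 1, k), h1⟩ 1
                    + Finsupp.single ⟨(l + 1, m, k), h2⟩ 1
                    - Finsupp.single ⟨(l, m, k + 1), h3⟩ 1) }))
      = (N + 1) / 2 :=
  stmt9_general N
end

section
/- Let $A$ be an associative unital algebra over a commutative ring $R \supseteq \mathbb{Q}$, let $X, Y \in A$ with $X$ nilpotent. Then $\sum_{p,q \ge 0} \frac{X^p Y X^q}{(p+q+1)!} = \exp(X) \cdot \sum_{n \ge 0} \frac{(-\operatorname{ad} X)^n}{(n+1)!}(Y)$, where $\operatorname{ad} X : A \to A$ is $Z \mapsto XZ - ZX$, $\exp(X) = \sum_{n\ge 0} X^n/n!$, and all sums are finite by nilpotency of $X$ (hence of $\operatorname{ad} X$). -/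
open Finset

private lemma alt_partial_sum (n : ℕ) : ∀ a : ℕ,
    ∑ k ∈ range (a + 1), (-1 : ℚ) ^ k * ((n + 1).choose k) = (-1) ^ a * (n.choose a)
  | 0 => by simp
  | (a + 1) => by
    rw [Finset.sum_range_succ, alt_partial_sum n a, Nat.choose_succ_succ]
    push_cast
    ring

private lemma tri {M : Type*} [AddCommMonoid M] (m : ℕ) (g : ℕ → ℕ → M) :
    ∑ s ∈ range m, ∑ k ∈ range (s + 1), g k (s - k)
      = ∑ p ∈ (range m ×ˢ range m).filter (fun p => p.1 + p.2 < m), g p.1 p.2 := by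
  rw [Finset.sum_sigma']
  apply Finset.sum_nbij' (i := fun x => (x.2, x.1 - x.2)) (j := fun p => ⟨p.1 + p.2, p.1⟩)
  · intro x hx
    simp only [mem_sigma, mem_range, mem_filter, mem_product] at hx ⊢
    omega
  · intro p hp
    simp only [mem_sigma, mem_range, mem_filter, mem_product] at hp ⊢
    omega
  · intro x hx
    simp only [mem_sigma, mem_range] at hx
    ext
    · simp; omega
    · simp
  · intro p hp; simp
  · intro x hx; rfl

private lemma tri' {M : Type*} [AddCommMonoid M] (m : ℕ) (g : ℕ → ℕ → M) :
    ∑ s ∈ range m, ∑ k ∈ range (s + 1), g (s - k) k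
      = ∑ p ∈ (range m ×ˢ range m).filter (fun p => p.1 + p.2 < m), g p.1 p.2 := by
  rw [Finset.sum_sigma']
  apply Finset.sum_nbij' (i := fun x => (x.1 - x.2, x.2)) (j := fun p => ⟨p.1 + p.2, p.2⟩)
  · intro x hx
    simp only [mem_sigma, mem_range, mem_filter, mem_product] at hx ⊢
    omega
  · intro p hp
    simp only [mem_sigma, mem_range, mem_filter, mem_product] at hp ⊢
    omega
  · intro x hx
    simp only [mem_sigma, mem_range] at hx
    ext
    · simp; omega
    · simp
  · intro p hp; simp
  · intro x hx; rfl

private lemma key_s10 (a q : ℕ) :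
    ∑ k ∈ range (a + 1), ((-1 : ℚ) ^ k * ((k.factorial : ℚ))⁻¹)
        * (((a - k + q + 1).factorial : ℚ))⁻¹
      = (((a + q + 1).factorial : ℚ))⁻¹ * ((-1 : ℚ) ^ a * (((a + q).choose q : ℕ) : ℚ)) := by
  have step : ∑ k ∈ range (a + 1), ((-1 : ℚ) ^ k * ((k.factorial : ℚ))⁻¹)
        * (((a - k + q + 1).factorial : ℚ))⁻¹
      = (((a + q + 1).factorial : ℚ))⁻¹
        * ∑ k ∈ range (a + 1), (-1 : ℚ) ^ k * ((a + q + 1).choose k : ℚ) := by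
    rw [Finset.mul_sum]
    refine Finset.sum_congr rfl fun k hk => ?_
    have hk' : k ≤ a := Nat.lt_succ_iff.mp (Finset.mem_range.mp hk)
    have hc : ((a + q + 1).choose k : ℚ)
        = ((a + q + 1).factorial : ℚ)
          / ((k.factorial : ℚ) * (((a + q + 1 - k).factorial : ℚ))) := by
      exact_mod_cast Nat.cast_choose ℚ (by omega : k ≤ a + q + 1)
    have he : a + q + 1 - k = a - k + q + 1 := by omega
    rw [hc, he]
    field_simp
  rw [step, alt_partial_sum (a + q) a]
  have : (a + q).choose a = (a + q).choose q := by
    rw [← Nat.choose_symm (by omega : a ≤ a + q), Nat.add_sub_cancel_left]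
  rw [this]

private lemma keyinv (s : ℕ) :
    ∑ k ∈ range (s + 1),
        ((k.factorial : ℚ))⁻¹ * ((-1 : ℚ) ^ (s - k) * (((s - k).factorial : ℚ))⁻¹)
      = if s = 0 then 1 else 0 := by
  rcases Nat.eq_zero_or_pos s with rfl | hs
  · simp
  · rw [if_neg hs.ne']
    have step : ∑ k ∈ range (s + 1),
          ((k.factorial : ℚ))⁻¹ * ((-1 : ℚ) ^ (s - k) * (((s - k).factorial : ℚ))⁻¹)
        = ((s.factorial : ℚ))⁻¹ * ((-1 : ℚ) ^ s)
          * ∑ k ∈ range (s + 1), (-1 : ℚ) ^ k * (s.choose k : ℚ) := by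
      rw [mul_assoc, Finset.mul_sum, Finset.mul_sum]
      refine Finset.sum_congr rfl fun k hk => ?_
      have hk' : k ≤ s := Nat.lt_succ_iff.mp (Finset.mem_range.mp hk)
      have hc : (s.choose k : ℚ)
          = ((s.factorial : ℚ)) / ((k.factorial : ℚ) * (((s - k).factorial : ℚ))) := by
        exact_mod_cast Nat.cast_choose ℚ hk'
      have hsg : (-1 : ℚ) ^ (s - k) = (-1 : ℚ) ^ (s + k) := by
        rw [show s + k = (s - k) + 2 * k by omega, pow_add, pow_mul]
        simp
      rw [hc, hsg, pow_add]
      field_simp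
    obtain ⟨t, rfl⟩ := Nat.exists_eq_add_of_lt hs
    rw [step]
    rw [show 0 + t + 1 = t + 1 by omega] at *
    rw [alt_partial_sum t (t + 1)]
    simp [Nat.choose_eq_zero_of_lt (Nat.lt_succ_self t)]

private lemma ad_pow {A : Type*} [Ring A] [Algebra ℚ A] (X Y : A) (n : ℕ) :
    ((-(LinearMap.mulLeft ℚ X - LinearMap.mulRight ℚ X)) ^ n) Y
      = ∑ j ∈ range (n + 1),
          ((-1 : ℚ) ^ (n - j) * ((n.choose j : ℕ) : ℚ)) • (X ^ (n - j) * Y * X ^ j) := by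
  have e1 : -(LinearMap.mulLeft ℚ X - LinearMap.mulRight ℚ X)
      = LinearMap.mulRight ℚ X + LinearMap.mulLeft ℚ (-X) := by
    apply LinearMap.ext; intro w
    simp only [LinearMap.neg_apply, LinearMap.sub_apply, LinearMap.add_apply,
      LinearMap.mulLeft_apply, LinearMap.mulRight_apply, neg_mul]
    noncomm_ring
  have hc : Commute (LinearMap.mulRight ℚ X) (LinearMap.mulLeft ℚ (-X)) :=
    (LinearMap.commute_mulLeft_right (-X) X).symm
  rw [e1, hc.add_pow]
  rw [LinearMap.sum_apply]
  refine Finset.sum_congr rfl fun j hj => ?_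
  rw [Module.End.mul_apply, Module.End.mul_apply, LinearMap.pow_mulRight, LinearMap.pow_mulLeft,
    Module.End.natCast_apply, LinearMap.mulLeft_apply, LinearMap.mulRight_apply]
  rw [show (-X) = ((-1 : ℚ) • X) from (neg_one_smul ℚ X).symm, smul_pow,
    ← Nat.cast_smul_eq_nsmul ℚ (n.choose j) Y]
  simp only [smul_mul_assoc, mul_smul_comm, smul_smul]
  ring_nf

/-- For `X` nilpotent (say `X^m = 0`) in an associative unital algebra over a commutative
ring containing `ℚ`:
`∑_{p,q≥0} X^p Y X^q/(p+q+1)! = exp(X) ⬝ ∑_{n≥0} (-ad X)^n (Y)/(n+1)!`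
(all sums finite by nilpotency). -/
theorem stmt10 {R A : Type*} [CommRing R] [Algebra ℚ R]
    [Ring A] [Algebra R A] [Algebra ℚ A] [IsScalarTower ℚ R A]
    (X Y : A) (m : ℕ) (hX : X ^ m = 0) :
    ∑ p ∈ Finset.range m, ∑ q ∈ Finset.range m,
        (((p + q + 1).factorial : ℚ))⁻¹ • (X ^ p * Y * X ^ q)
      = (∑ n ∈ Finset.range m, ((n.factorial : ℚ))⁻¹ • X ^ n) *
          (∑ n ∈ Finset.range (2 * m),
            (((n + 1).factorial : ℚ))⁻¹ •
              ((-(LinearMap.mulLeft ℚ X - LinearMap.mulRight ℚ X)) ^ n) Y) := by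
  classical
  rcases Nat.eq_zero_or_pos m with rfl | hm
  · simp
  have hxv : ∀ a : ℕ, m ≤ a → X ^ a = 0 := by
    intro a ha
    rw [show a = m + (a - m) by omega, pow_add, hX, zero_mul]
  -- notation for the canonical coefficient
  set z : ℕ → ℕ → ℚ := fun a b =>
    (((a + b + 1).factorial : ℚ))⁻¹ * ((-1 : ℚ) ^ a * (((a + b).choose b : ℕ) : ℚ)) with hzdef
  -- Step 1 : the second factor of the RHS in canonical form
  have hZ : (∑ n ∈ Finset.range (2 * m),
        (((n + 1).factorial : ℚ))⁻¹ •
          ((-(LinearMap.mulLeft ℚ X - LinearMap.mulRight ℚ X)) ^ n) Y)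
      = ∑ p ∈ range m ×ˢ range m, z p.1 p.2 • (X ^ p.1 * Y * X ^ p.2) := by
    calc ∑ n ∈ Finset.range (2 * m),
          (((n + 1).factorial : ℚ))⁻¹ •
            ((-(LinearMap.mulLeft ℚ X - LinearMap.mulRight ℚ X)) ^ n) Y
        = ∑ n ∈ range (2 * m), ∑ j ∈ range (n + 1),
            z (n - j) j • (X ^ (n - j) * Y * X ^ j) := by
          refine Finset.sum_congr rfl fun n _ => ?_
          rw [ad_pow, Finset.smul_sum]
          refine Finset.sum_congr rfl fun j hj => ?_
          have hj' : j ≤ n := Nat.lt_succ_iff.mp (Finset.mem_range.mp hj)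
          rw [smul_smul]
          congr 1
          simp only [hzdef]
          rw [show n - j + j = n by omega]
      _ = ∑ p ∈ (range (2 * m) ×ˢ range (2 * m)).filter (fun p => p.1 + p.2 < 2 * m),
            z p.1 p.2 • (X ^ p.1 * Y * X ^ p.2) :=
          tri' (2 * m) (fun a b => z a b • (X ^ a * Y * X ^ b))
      _ = ∑ p ∈ range m ×ˢ range m, z p.1 p.2 • (X ^ p.1 * Y * X ^ p.2) := by
          refine (Finset.sum_subset ?_ ?_).symm
          · intro p hp
            simp only [mem_product, mem_range, mem_filter] at hp ⊢
            omega
          · intro p hp hnp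
            simp only [mem_product, mem_range, mem_filter] at hp hnp
            rcases (by omega : m ≤ p.1 ∨ m ≤ p.2) with h | h
            · rw [hxv _ h, zero_mul, zero_mul, smul_zero]
            · rw [hxv _ h, mul_zero, smul_zero]
  -- Step 2 : exp(X) * exp(-X) = 1 (truncated)
  have hinv : (∑ n ∈ Finset.range m, ((n.factorial : ℚ))⁻¹ • X ^ n)
      * (∑ n ∈ Finset.range m, ((-1 : ℚ) ^ n * ((n.factorial : ℚ))⁻¹) • X ^ n) = 1 := by
    calc (∑ n ∈ Finset.range m, ((n.factorial : ℚ))⁻¹ • X ^ n)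
        * (∑ n ∈ Finset.range m, ((-1 : ℚ) ^ n * ((n.factorial : ℚ))⁻¹) • X ^ n)
        = ∑ i ∈ range m, ∑ j ∈ range m,
            (((i.factorial : ℚ))⁻¹ * ((-1 : ℚ) ^ j * ((j.factorial : ℚ))⁻¹)) • X ^ (i + j) := by
          rw [Finset.sum_mul_sum]
          refine Finset.sum_congr rfl fun i _ => Finset.sum_congr rfl fun j _ => ?_
          simp only [smul_mul_assoc, mul_smul_comm, smul_smul, ← pow_add]
          congr 1
          ring
      _ = ∑ p ∈ range m ×ˢ range m,
            (((p.1.factorial : ℚ))⁻¹ * ((-1 : ℚ) ^ p.2 * ((p.2.factorial : ℚ))⁻¹)) • X ^ (p.1 + p.2) :=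
          (Finset.sum_product' _ _ _).symm
      _ = ∑ p ∈ (range m ×ˢ range m).filter (fun p => p.1 + p.2 < m),
            (((p.1.factorial : ℚ))⁻¹ * ((-1 : ℚ) ^ p.2 * ((p.2.factorial : ℚ))⁻¹)) • X ^ (p.1 + p.2) := by
          refine (Finset.sum_subset (Finset.filter_subset _ _) ?_).symm
          intro p hp hnp
          simp only [mem_product, mem_range, mem_filter] at hp hnp
          rw [hxv _ (by omega), smul_zero]
      _ = ∑ s ∈ range m, ∑ k ∈ range (s + 1),
            (((k.factorial : ℚ))⁻¹ * ((-1 : ℚ) ^ (s - k) * (((s - k).factorial : ℚ))⁻¹))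
              • X ^ (k + (s - k)) :=
          (tri m (fun k l =>
            (((k.factorial : ℚ))⁻¹ * ((-1 : ℚ) ^ l * ((l.factorial : ℚ))⁻¹)) • X ^ (k + l))).symm
      _ = ∑ s ∈ range m, (if s = 0 then (1 : ℚ) else 0) • X ^ s := by
          refine Finset.sum_congr rfl fun s hs => ?_
          rw [← keyinv s, Finset.sum_smul]
          refine Finset.sum_congr rfl fun k hk => ?_
          have hk' : k ≤ s := Nat.lt_succ_iff.mp (Finset.mem_range.mp hk)
          rw [show k + (s - k) = s by omega]
      _ = 1 := by
          simp only [ite_smul, one_smul, zero_smul]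
          simp [hm]
  -- Step 3 : exp(-X) * LHS = canonical form
  have hEF : (∑ n ∈ Finset.range m, ((-1 : ℚ) ^ n * ((n.factorial : ℚ))⁻¹) • X ^ n)
      * (∑ p ∈ Finset.range m, ∑ q ∈ Finset.range m,
          (((p + q + 1).factorial : ℚ))⁻¹ • (X ^ p * Y * X ^ q))
      = ∑ p ∈ range m ×ˢ range m, z p.1 p.2 • (X ^ p.1 * Y * X ^ p.2) := by
    have inner : ∀ q ∈ range m,
        (∑ n ∈ Finset.range m, ((-1 : ℚ) ^ n * ((n.factorial : ℚ))⁻¹) • X ^ n)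
          * (∑ p ∈ Finset.range m, (((p + q + 1).factorial : ℚ))⁻¹ • (X ^ p * Y * X ^ q))
        = ∑ a ∈ range m, z a q • (X ^ a * Y * X ^ q) := by
      intro q hq
      calc (∑ n ∈ Finset.range m, ((-1 : ℚ) ^ n * ((n.factorial : ℚ))⁻¹) • X ^ n)
            * (∑ p ∈ Finset.range m, (((p + q + 1).factorial : ℚ))⁻¹ • (X ^ p * Y * X ^ q))
          = ∑ k ∈ range m, ∑ p ∈ range m,
              (((-1 : ℚ) ^ k * ((k.factorial : ℚ))⁻¹) * (((p + q + 1).factorial : ℚ))⁻¹)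
                • (X ^ (k + p) * (Y * X ^ q)) := by
            rw [Finset.sum_mul_sum]
            refine Finset.sum_congr rfl fun k _ => Finset.sum_congr rfl fun p _ => ?_
            simp only [smul_mul_assoc, mul_smul_comm, smul_smul, pow_add, mul_assoc]
            congr 1
            ring
        _ = ∑ pr ∈ range m ×ˢ range m,
              (((-1 : ℚ) ^ pr.1 * ((pr.1.factorial : ℚ))⁻¹)
                  * (((pr.2 + q + 1).factorial : ℚ))⁻¹)
                • (X ^ (pr.1 + pr.2) * (Y * X ^ q)) :=
            (Finset.sum_product' _ _ _).symm
        _ = ∑ pr ∈ (range m ×ˢ range m).filter (fun pr => pr.1 + pr.2 < m),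
              (((-1 : ℚ) ^ pr.1 * ((pr.1.factorial : ℚ))⁻¹)
                  * (((pr.2 + q + 1).factorial : ℚ))⁻¹)
                • (X ^ (pr.1 + pr.2) * (Y * X ^ q)) := by
            refine (Finset.sum_subset (Finset.filter_subset _ _) ?_).symm
            intro pr hpr hnpr
            simp only [mem_product, mem_range, mem_filter] at hpr hnpr
            rw [hxv _ (by omega), zero_mul, smul_zero]
        _ = ∑ s ∈ range m, ∑ k ∈ range (s + 1),
              (((-1 : ℚ) ^ k * ((k.factorial : ℚ))⁻¹)
                  * ((((s - k) + q + 1).factorial : ℚ))⁻¹)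
                • (X ^ (k + (s - k)) * (Y * X ^ q)) :=
            (tri m (fun k l =>
              (((-1 : ℚ) ^ k * ((k.factorial : ℚ))⁻¹) * (((l + q + 1).factorial : ℚ))⁻¹)
                • (X ^ (k + l) * (Y * X ^ q)))).symm
        _ = ∑ a ∈ range m, z a q • (X ^ a * Y * X ^ q) := by
            refine Finset.sum_congr rfl fun s hs => ?_
            have h1 : ∑ k ∈ range (s + 1),
                  (((-1 : ℚ) ^ k * ((k.factorial : ℚ))⁻¹)
                      * ((((s - k) + q + 1).factorial : ℚ))⁻¹)
                    • (X ^ (k + (s - k)) * (Y * X ^ q))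
                = ∑ k ∈ range (s + 1),
                  (((-1 : ℚ) ^ k * ((k.factorial : ℚ))⁻¹)
                      * (((s - k + q + 1).factorial : ℚ))⁻¹)
                    • (X ^ s * (Y * X ^ q)) := by
              refine Finset.sum_congr rfl fun k hk => ?_
              have hk' : k ≤ s := Nat.lt_succ_iff.mp (Finset.mem_range.mp hk)
              rw [show k + (s - k) = s by omega]
            rw [h1, ← Finset.sum_smul, key_s10 s q]
            simp only [hzdef]
            rw [mul_assoc]
    calc (∑ n ∈ Finset.range m, ((-1 : ℚ) ^ n * ((n.factorial : ℚ))⁻¹) • X ^ n)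
          * (∑ p ∈ Finset.range m, ∑ q ∈ Finset.range m,
              (((p + q + 1).factorial : ℚ))⁻¹ • (X ^ p * Y * X ^ q))
        = ∑ q ∈ range m,
            (∑ n ∈ Finset.range m, ((-1 : ℚ) ^ n * ((n.factorial : ℚ))⁻¹) • X ^ n)
              * (∑ p ∈ Finset.range m, (((p + q + 1).factorial : ℚ))⁻¹ • (X ^ p * Y * X ^ q)) := by
          rw [Finset.sum_comm, Finset.mul_sum]
      _ = ∑ q ∈ range m, ∑ a ∈ range m, z a q • (X ^ a * Y * X ^ q) :=
          Finset.sum_congr rfl inner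
      _ = ∑ p ∈ range m ×ˢ range m, z p.1 p.2 • (X ^ p.1 * Y * X ^ p.2) := by
          rw [Finset.sum_comm]
          exact (Finset.sum_product' _ _ _).symm
  rw [hZ, ← hEF, ← mul_assoc, hinv, one_mul]
end

section
/- Let $R$ be a commutative ring containing $\mathbb{Q}$, let $H$ be a bialgebra over $R$ with comultiplication $\Delta$ and counit $\eta$, and let $\alpha \in H$ be a nilpotent element such that $\alpha \otimes 1$ and $1 \otimes \alpha$ are nilpotent in $H \otimes_R H$. Then $\alpha$ is primitive with $\eta(\alpha) = 0$ (i.e., $\Delta(\alpha) = \alpha \otimes 1 + 1 \otimes \alpha$ and $\eta(\alpha) = 0$) if and only if $\exp(\alpha)$ is grouplike (i.e., $\Delta(\exp \alpha) = \exp(\alpha) \otimes \exp(\alpha)$ and $\eta(\exp \alpha) = 1$), where $\exp(\alpha) = \sum_{n \ge 0} \alpha^n / n!$ is a finite sum. -/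
/-!
Since `Δ` and `η` are algebra maps they commute with `exp`, and since `α ⊗ 1` and
`1 ⊗ α` commute, `exp (α ⊗ 1 + 1 ⊗ α) = exp α ⊗ exp α`. Both conditions therefore compare
`exp` of two nilpotents, and the theorem reduces to injectivity of `exp` on nilpotent
elements. For that, `exp (k • a) = (exp a) ^ k`, so `exp a = exp b` makes
`∑ₙ kⁿ (aⁿ - bⁿ) / n!` vanish at every natural `k`; by Vandermonde all its coefficients
vanish, in particular the linear one `a - b`.
-/

open TensorProduct

theorem Module.eq_zero_of_forall_sum_natCast_pow_smul_eq_zero {K M : Type*} [Field K]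
    [CharZero K] [AddCommGroup M] [Module K M] {m : ℕ} {c : Fin m → M}
    (hc : ∀ k : ℕ, ∑ i : Fin m, (k : K) ^ (i : ℕ) • c i = 0) : c = 0 := by
  funext i
  refine (Module.forall_dual_apply_eq_zero_iff K (c i)).1 fun φ => ?_
  have hφ : φ ∘ c = 0 := by
    refine Matrix.eq_zero_of_forall_index_sum_pow_mul_eq_zero
      (f := fun j : Fin m => ((j : ℕ) : K)) (fun j j' h => Fin.ext (Nat.cast_injective h))
      fun j => ?_
    simpa [map_sum, map_smul] using congrArg φ (hc j)
  exact congrFun hφ i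

namespace IsNilpotent

variable {A : Type*} [Ring A] [Module ℚ A]

theorem exp_nsmul {a : A} (ha : IsNilpotent a) (k : ℕ) : exp (k • a) = exp a ^ k := by
  induction k with
  | zero => simp
  | succ k ih =>
    rw [succ_nsmul, exp_add_of_commute ((Commute.refl a).smul_left k) (ha.smul k) ha, ih,
      _root_.pow_succ]

theorem exp_nsmul_eq_sum {a : A} {m : ℕ} (ha : a ^ m = 0) (k : ℕ) :
    exp (k • a) = ∑ i : Fin m, (k : ℚ) ^ (i : ℕ) • ((i : ℕ).factorial : ℚ)⁻¹ • a ^ (i : ℕ) := by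
  rw [exp_eq_sum (k := m) (by rw [smul_pow, ha, smul_zero]), ← Fin.sum_univ_eq_sum_range]
  refine Finset.sum_congr rfl fun i _ => ?_
  rw [smul_pow, ← Nat.cast_smul_eq_nsmul ℚ, Nat.cast_pow, smul_comm]

theorem exp_inj {a b : A} (ha : IsNilpotent a) (hb : IsNilpotent b) :
    exp a = exp b ↔ a = b := by
  refine ⟨fun h => ?_, congrArg exp⟩
  obtain ⟨p, hp⟩ := ha
  obtain ⟨q, hq⟩ := hb
  set m := p + q + 2
  have ham : a ^ m = 0 := pow_eq_zero_of_le (by omega) hp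
  have hbm : b ^ m = 0 := pow_eq_zero_of_le (by omega) hq
  have hcoeff := Module.eq_zero_of_forall_sum_natCast_pow_smul_eq_zero (K := ℚ)
    (c := fun i : Fin m => ((i : ℕ).factorial : ℚ)⁻¹ • (a ^ (i : ℕ) - b ^ (i : ℕ))) fun k => by
      simp_rw [smul_sub, Finset.sum_sub_distrib, ← exp_nsmul_eq_sum ham, ← exp_nsmul_eq_sum hbm,
        exp_nsmul ⟨p, hp⟩, exp_nsmul ⟨q, hq⟩, h, sub_self]
  simpa [sub_eq_zero] using congrFun hcoeff ⟨1, by omega⟩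

theorem exp_tmul_exp {R B : Type*} [CommRing R] [Algebra R A] [Ring B] [Algebra R B]
    [Module ℚ B] [Module ℚ (A ⊗[R] B)] {a : A} {b : B} (ha : IsNilpotent a) (hb : IsNilpotent b) :
    exp a ⊗ₜ[R] exp b = exp (a ⊗ₜ[R] (1 : B) + (1 : A) ⊗ₜ[R] b) := by
  have hleft : exp a ⊗ₜ[R] (1 : B) = exp (a ⊗ₜ[R] (1 : B)) :=
    map_exp ha (Algebra.TensorProduct.includeLeft (S := R) (B := B))
  have hright : (1 : A) ⊗ₜ[R] exp b = exp ((1 : A) ⊗ₜ[R] b) :=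
    map_exp hb (Algebra.TensorProduct.includeRight (A := A))
  have hadd :
      exp (a ⊗ₜ[R] (1 : B) + (1 : A) ⊗ₜ[R] b) = exp (a ⊗ₜ[R] 1) * exp (1 ⊗ₜ[R] b) :=
    exp_add_of_commute ((Commute.one_right a).tmul (Commute.one_left b))
      (ha.map (Algebra.TensorProduct.includeLeft (S := R) (B := B)))
      (hb.map (Algebra.TensorProduct.includeRight (A := A)))
  rw [hadd, ← hleft, ← hright, Algebra.TensorProduct.tmul_mul_tmul, mul_one, one_mul]

end IsNilpotent

theorem stmt12_general {R H : Type*} [CommRing R] [Algebra ℚ R]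
    [Ring H] [Bialgebra R H] [Algebra ℚ H]
    (α : H) (m : ℕ) (hα : α ^ m = 0) :
    (Coalgebra.comul (R := R) α = α ⊗ₜ[R] 1 + 1 ⊗ₜ[R] α ∧
        Coalgebra.counit (R := R) α = 0) ↔
    (Coalgebra.comul (R := R) (∑ n ∈ Finset.range m, ((n.factorial : ℚ))⁻¹ • α ^ n)
        = (∑ n ∈ Finset.range m, ((n.factorial : ℚ))⁻¹ • α ^ n) ⊗ₜ[R]
            (∑ n ∈ Finset.range m, ((n.factorial : ℚ))⁻¹ • α ^ n) ∧
      Coalgebra.counit (R := R)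
          (∑ n ∈ Finset.range m, ((n.factorial : ℚ))⁻¹ • α ^ n) = 1) := by
  have hnil : IsNilpotent α := ⟨m, hα⟩
  have hcomul : IsNilpotent (Coalgebra.comul (R := R) α) := hnil.map (Bialgebra.comulAlgHom R H)
  have hcounit : IsNilpotent (Coalgebra.counit (R := R) α) :=
    hnil.map (Bialgebra.counitAlgHom R H)
  have hprim : IsNilpotent (α ⊗ₜ[R] (1 : H) + (1 : H) ⊗ₜ[R] α) :=
    ((Commute.one_right α).tmul (Commute.one_left α)).isNilpotent_add
      (hnil.map (Algebra.TensorProduct.includeLeft (S := R) (B := H)))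
      (hnil.map (Algebra.TensorProduct.includeRight (A := H)))
  have hcomul_exp : Coalgebra.comul (R := R) (IsNilpotent.exp α) =
      IsNilpotent.exp (Coalgebra.comul (R := R) α) :=
    IsNilpotent.map_exp hnil (Bialgebra.comulAlgHom R H)
  have hcounit_exp : Coalgebra.counit (R := R) (IsNilpotent.exp α) =
      IsNilpotent.exp (Coalgebra.counit (R := R) α) :=
    IsNilpotent.map_exp hnil (Bialgebra.counitAlgHom R H)
  rw [← IsNilpotent.exp_eq_sum hα, hcomul_exp, hcounit_exp, IsNilpotent.exp_tmul_exp hnil hnil,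
    IsNilpotent.exp_inj hcomul hprim, ← IsNilpotent.exp_zero (A := R),
    IsNilpotent.exp_inj hcounit IsNilpotent.zero]

/-- For a nilpotent `α` (with `α ⊗ 1`, `1 ⊗ α` nilpotent) in a bialgebra `H` over a
commutative ring containing `ℚ`: `α` is primitive with `η(α) = 0` iff `exp(α)` is
grouplike, where `exp(α) = ∑_{n<m} α^n/n!` for `α^m = 0`. -/
theorem stmt12 {R H : Type*} [CommRing R] [Algebra ℚ R]
    [Ring H] [Bialgebra R H] [Algebra ℚ H] [IsScalarTower ℚ R H]
    (α : H) (m : ℕ) (hα : α ^ m = 0)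
    (h1 : IsNilpotent (α ⊗ₜ[R] (1 : H))) (h2 : IsNilpotent ((1 : H) ⊗ₜ[R] α)) :
    (Coalgebra.comul (R := R) α = α ⊗ₜ[R] 1 + 1 ⊗ₜ[R] α ∧
        Coalgebra.counit (R := R) α = 0) ↔
    (Coalgebra.comul (R := R) (∑ n ∈ Finset.range m, ((n.factorial : ℚ))⁻¹ • α ^ n)
        = (∑ n ∈ Finset.range m, ((n.factorial : ℚ))⁻¹ • α ^ n) ⊗ₜ[R]
            (∑ n ∈ Finset.range m, ((n.factorial : ℚ))⁻¹ • α ^ n) ∧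
      Coalgebra.counit (R := R)
          (∑ n ∈ Finset.range m, ((n.factorial : ℚ))⁻¹ • α ^ n) = 1) :=
  stmt12_general α m hα
end

section
/- Let $k$ be a commutative ring, $M$ a $k$-module with a symplectic bilinear form $\Phi : M \times M \to k$ (i.e., $\Phi(x,x) = 0$ for all $x$), and let $SW(M,\Phi) = T(M)/\langle x \otimes y - y \otimes x - \Phi(x,y)\cdot 1 \rangle$ be the symplectic Weyl algebra with canonical map $i : M \to SW(M,\Phi)$. Then for every $k$-linear functional $u \in \operatorname{Hom}_k(M, k)$ there exists a unique $k$-linear derivation $D_u : SW(M,\Phi) \to SW(M,\Phi)$ such that $D_u(i(x)) = u(x) \cdot 1$ for all $x \in M$. -/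
open TensorAlgebra

/-- The defining relations of the symplectic Weyl algebra `SW(M,Φ)`:
`ι x * ι y = ι y * ι x + Φ(x,y)·1`. -/
inductive SWRel {k M : Type*} [CommRing k] [AddCommGroup M] [Module k M]
    (Φ : M →ₗ[k] M →ₗ[k] k) : TensorAlgebra k M → TensorAlgebra k M → Prop
  | rel (x y : M) :
      SWRel Φ (ι k x * ι k y) (ι k y * ι k x + algebraMap k (TensorAlgebra k M) (Φ x y))

/-!
Existence: in the dual numbers `SW[ε] = TrivSqZeroExt SW SW` the elements `i(x) + u(x)ε` satisfy
the Weyl relations, because `u(x)` and `u(y)` are central scalars and so the `ε`-parts of their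
commutator cancel. The resulting algebra map `SW → SW[ε]` has constant part the identity, which
forces its `ε`-part to be a derivation. Uniqueness: a derivation vanishes on `k·1`, so it is
determined by its values on the algebra generators `i(x)`.
-/

open TrivSqZeroExt

section Leibniz

variable {k A : Type*} [CommSemiring k] [Ring A] [Algebra k A]

theorem map_one_eq_zero_of_leibniz {D : A →ₗ[k] A}
    (hD : ∀ a b, D (a * b) = D a * b + a * D b) : D 1 = 0 := by
  simpa using hD 1 1

theorem eqOn_adjoin_of_leibniz {D₁ D₂ : A →ₗ[k] A}
    (h₁ : ∀ a b, D₁ (a * b) = D₁ a * b + a * D₁ b)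
    (h₂ : ∀ a b, D₂ (a * b) = D₂ a * b + a * D₂ b) {s : Set A} (h : Set.EqOn D₁ D₂ s) :
    Set.EqOn D₁ D₂ (Algebra.adjoin k s) := by
  intro a ha
  induction ha using Algebra.adjoin_induction with
  | mem x hx => exact h hx
  | algebraMap r =>
    simp only [Algebra.algebraMap_eq_smul_one, map_smul, map_one_eq_zero_of_leibniz h₁,
      map_one_eq_zero_of_leibniz h₂]
  | add x y _ _ hx hy => simp only [map_add, hx, hy]
  | mul x y _ _ hx hy => rw [h₁, h₂, hx, hy]

theorem snd_map_mul_of_fst_map_eq (f : A →ₐ[k] TrivSqZeroExt A A) (hf : ∀ a, (f a).fst = a)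
    (a b : A) :
    (f (a * b)).snd = (f a).snd * b + a * (f b).snd := by
  rw [map_mul, snd_mul, hf, hf, smul_eq_mul, op_smul_eq_mul, add_comm]

end Leibniz

section DualNumbers

variable {k M A : Type*} [CommRing k] [AddCommGroup M] [Module k M] [Ring A] [Algebra k A]

noncomputable def dualGen (g : M →ₗ[k] A) (u : M →ₗ[k] k) : M →ₗ[k] TrivSqZeroExt A A :=
  (inlAlgHom k A A).toLinearMap ∘ₗ g + (inrHom A A).restrictScalars k ∘ₗ u.smulRight 1

theorem dualGen_apply (g : M →ₗ[k] A) (u : M →ₗ[k] k) (x : M) :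
    dualGen g u x = inl (g x) + inr (u x • 1) := rfl

theorem dualGen_commutator (g : M →ₗ[k] A) (u : M →ₗ[k] k) (x y : M) :
    dualGen g u x * dualGen g u y - dualGen g u y * dualGen g u x =
      inl (g x * g y - g y * g x) := by
  ext
  · simp only [dualGen_apply, fst_sub, fst_mul, fst_add, fst_inl, fst_inr, add_zero]
  · simp only [dualGen_apply, snd_sub, snd_mul, fst_add, snd_add, fst_inl, fst_inr, snd_inl, snd_inr,
      smul_eq_mul, op_smul_eq_mul, zero_add, Algebra.smul_def, mul_one]
    rw [Algebra.commutes (u x), Algebra.commutes (u y)]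
    abel

end DualNumbers

section WeylAlgebra

variable {k M : Type*} [CommRing k] [AddCommGroup M] [Module k M] (Φ : M →ₗ[k] M →ₗ[k] k)

theorem adjoin_range_mkAlgHom_ι :
    Algebra.adjoin k (Set.range (RingQuot.mkAlgHom k (SWRel Φ) ∘ ι k)) = ⊤ := by
  rw [Set.range_comp, Algebra.adjoin_image, adjoin_range_ι, Algebra.map_top,
    AlgHom.range_eq_top]
  exact RingQuot.mkAlgHom_surjective k (SWRel Φ)

variable (u : M →ₗ[k] k)

noncomputable def swDual :
    RingQuot (SWRel Φ) →ₐ[k] TrivSqZeroExt (RingQuot (SWRel Φ)) (RingQuot (SWRel Φ)) :=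
  RingQuot.liftAlgHom k
    ⟨lift k (dualGen ((RingQuot.mkAlgHom k (SWRel Φ)).toLinearMap ∘ₗ ι k) u), by
      rintro _ _ ⟨x, y⟩
      have hrel := RingQuot.mkAlgHom_rel k (SWRel.rel (Φ := Φ) x y)
      rw [map_mul, map_add, map_mul, AlgHom.commutes, ← sub_eq_iff_eq_add'] at hrel
      simp only [map_mul, map_add, AlgHom.commutes, lift_ι_apply]
      rw [← sub_eq_iff_eq_add', dualGen_commutator]
      simp only [LinearMap.coe_comp, Function.comp_apply, AlgHom.toLinearMap_apply, hrel,
        algebraMap_eq_inl']⟩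

theorem swDual_mkAlgHom_ι (x : M) :
    swDual Φ u (RingQuot.mkAlgHom k (SWRel Φ) (ι k x))
      = inl (RingQuot.mkAlgHom k (SWRel Φ) (ι k x)) + inr (u x • 1) := by
  rw [swDual, RingQuot.liftAlgHom_mkAlgHom_apply]
  exact lift_ι_apply _ x

theorem fst_swDual (a : RingQuot (SWRel Φ)) : (swDual Φ u a).fst = a := by
  have : (fstHom k _ _).comp (swDual Φ u) = AlgHom.id k (RingQuot (SWRel Φ)) := by
    refine RingQuot.ringQuot_ext' _ _ _ (TensorAlgebra.hom_ext (LinearMap.ext fun x => ?_))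
    simp [swDual_mkAlgHom_ι]
  exact DFunLike.congr_fun this a

noncomputable def swDeriv : RingQuot (SWRel Φ) →ₗ[k] RingQuot (SWRel Φ) :=
  (sndHom _ _).restrictScalars k ∘ₗ (swDual Φ u).toLinearMap

theorem swDeriv_mul (a b : RingQuot (SWRel Φ)) :
    swDeriv Φ u (a * b) = swDeriv Φ u a * b + a * swDeriv Φ u b :=
  snd_map_mul_of_fst_map_eq _ (fst_swDual Φ u) a b

theorem swDeriv_mkAlgHom_ι (x : M) :
    swDeriv Φ u (RingQuot.mkAlgHom k (SWRel Φ) (ι k x)) = u x • 1 := by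
  simp [swDeriv, swDual_mkAlgHom_ι]

end WeylAlgebra

theorem stmt13_general {k M : Type*} [CommRing k] [AddCommGroup M] [Module k M]
    (Φ : M →ₗ[k] M →ₗ[k] k)
    (u : M →ₗ[k] k) :
    ∃! D : RingQuot (SWRel Φ) →ₗ[k] RingQuot (SWRel Φ),
      (∀ a b : RingQuot (SWRel Φ), D (a * b) = D a * b + a * D b) ∧
      (∀ x : M, D (RingQuot.mkAlgHom k (SWRel Φ) (ι k x)) = u x • 1) := by
  refine ⟨swDeriv Φ u, ⟨swDeriv_mul Φ u, swDeriv_mkAlgHom_ι Φ u⟩, ?_⟩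
  rintro D ⟨hD, hDι⟩
  have hgen : Set.EqOn D (swDeriv Φ u) (Set.range (RingQuot.mkAlgHom k (SWRel Φ) ∘ ι k)) := by
    rintro _ ⟨x, rfl⟩
    exact (hDι x).trans (swDeriv_mkAlgHom_ι Φ u x).symm
  refine LinearMap.ext fun a => eqOn_adjoin_of_leibniz hD (swDeriv_mul Φ u) hgen ?_
  rw [adjoin_range_mkAlgHom_ι]
  trivial

/-- For every linear functional `u : M → k` there is a unique `k`-linear derivation
`D_u` of the symplectic Weyl algebra `SW(M,Φ)` with `D_u(i(x)) = u(x)·1` for all `x`. -/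
theorem stmt13 {k M : Type*} [CommRing k] [AddCommGroup M] [Module k M]
    (Φ : M →ₗ[k] M →ₗ[k] k) (hΦ : ∀ x : M, Φ x x = 0)
    (u : M →ₗ[k] k) :
    ∃! D : RingQuot (SWRel Φ) →ₗ[k] RingQuot (SWRel Φ),
      (∀ a b : RingQuot (SWRel Φ), D (a * b) = D a * b + a * D b) ∧
      (∀ x : M, D (RingQuot.mkAlgHom k (SWRel Φ) (ι k x)) = u x • 1) :=
  stmt13_general Φ u
end

section
/- Let $A_n$ be the Weyl algebra over a commutative ring $k$, and let $\phi^\alpha_\mu, \phi'^\beta_\nu$ (indices in $\{1,\dots,n\}$) be elements of the commutative subalgebra generated by $\partial^1,\dots,\partial^n$. Writing $u := \sum_\alpha x_\alpha \phi^\alpha_\mu$, $u' := \sum_\alpha \phi^\alpha_\mu x_\alpha$, $v := \sum_\beta x_\beta \phi'^\beta_\nu$, $v' := \sum_\beta \phi'^\beta_\nu x_\beta$, one has the identity $[u, v] + [u', v'] = [u, v'] + [u', v]$ in $A_n$. -/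
open MvPolynomial

lemma weyl_key {k : Type*} [CommRing k]
    {A : Type*} [Ring A] [Algebra k A] {n : ℕ}
    (x : Fin n → A) (f : MvPolynomial (Fin n) k →ₐ[k] A)
    (hdx : ∀ i j : Fin n,
      f (X j) * x i - x i * f (X j) = if j = i then 1 else 0)
    (i : Fin n) (p : MvPolynomial (Fin n) k) :
    f p * x i - x i * f p = f (pderiv i p) := by
  induction p using MvPolynomial.induction_on with
  | C a =>
      simp [Algebra.commutes]
  | add p q hp hq =>
      rw [map_add, map_add, map_add, add_mul, mul_add, ← hp, ← hq]; noncomm_ring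
  | mul_X p j hp =>
      have h1 := hdx i j
      rw [map_mul, pderiv_mul, map_add, map_mul, map_mul, pderiv_X]
      have expand : f p * f (X j) * x i - x i * (f p * f (X j))
          = f p * (f (X j) * x i - x i * f (X j)) + (f p * x i - x i * f p) * f (X j) := by
        noncomm_ring
      rw [expand, h1, hp]
      by_cases hji : j = i
      · subst hji; simp [Pi.single_eq_same, add_comm]
      · simp [hji, Pi.single_eq_of_ne hji]

/-- In the Weyl algebra `A_n` (here: any `k`-algebra `A` with elements `x_i` and a copy
`f` of the commutative subalgebra `k[∂¹,…,∂ⁿ]`, satisfying the Weyl relations), for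
`u = ∑ x_α φ^α_μ`, `u' = ∑ φ^α_μ x_α`, `v = ∑ x_β φ'^β_ν`, `v' = ∑ φ'^β_ν x_β`:
`[u,v] + [u',v'] = [u,v'] + [u',v]`. -/
theorem stmt16 {k : Type*} [CommRing k]
    {A : Type*} [Ring A] [Algebra k A] (n : ℕ)
    (x : Fin n → A) (f : MvPolynomial (Fin n) k →ₐ[k] A)
    (hxx : ∀ i j, x i * x j = x j * x i)
    (hdx : ∀ i j : Fin n,
      f (X j) * x i - x i * f (X j) = if j = i then 1 else 0)
    (φ φ' : Fin n → Fin n → MvPolynomial (Fin n) k) (μ ν : Fin n) :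
    let u := ∑ α : Fin n, x α * f (φ α μ)
    let u' := ∑ α : Fin n, f (φ α μ) * x α
    let v := ∑ β : Fin n, x β * f (φ' β ν)
    let v' := ∑ β : Fin n, f (φ' β ν) * x β
    (u * v - v * u) + (u' * v' - v' * u') = (u * v' - v' * u) + (u' * v - v * u') := by
  intro u u' v v'
  have h1 : u' - u = f (∑ α : Fin n, pderiv α (φ α μ)) := by
    rw [map_sum]
    simp only [u, u', ← Finset.sum_sub_distrib]
    exact Finset.sum_congr rfl fun α _ => weyl_key x f hdx α (φ α μ)
  have h2 : v' - v = f (∑ β : Fin n, pderiv β (φ' β ν)) := by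
    rw [map_sum]
    simp only [v, v', ← Finset.sum_sub_distrib]
    exact Finset.sum_congr rfl fun β _ => weyl_key x f hdx β (φ' β ν)
  have hcomm : (u' - u) * (v' - v) = (v' - v) * (u' - u) := by
    rw [h1, h2, ← map_mul, ← map_mul, mul_comm]
  have expand : (u * v - v * u) + (u' * v' - v' * u')
      - ((u * v' - v' * u) + (u' * v - v * u'))
      = (u' - u) * (v' - v) - (v' - v) * (u' - u) := by noncomm_ring
  have h0 : (u * v - v * u) + (u' * v' - v' * u')
      - ((u * v' - v' * u) + (u' * v - v * u')) = 0 := by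
    rw [expand, hcomm, sub_self]
  exact sub_eq_zero.mp h0
end
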